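/- arXiv:2302.02033 — 13 statements merged into one kernel-verified Lean document; each statement's English description precedes it below -/
import Mathlib

section
/- Let d : ℝ × ℝ → ℝ be a divergence function satisfying properties (i)–(iv). Let K ≥ 2, let μ ∈ ℝ^K with m = min_a μ_a and M = max_a μ_a, and let γ ∈ ℝ satisfy m < γ < M and μ_a ≠ γ for every a (so μ is γ-feasible). Then sup_{w ∈ Δ_K} inf_{λ ∈ Alt(μ)} Σ_{a=1}^K w_a · d(μ_a, λ_a) = ( d(m,γ)^{-1} + d(M,γ)^{-1} )^{-1}; equivalently, the characteristic time T*(μ), defined as the reciprocal of this sup-inf value, equals 1/d(m,γ) + 1/d(M,γ). (Theorem 1, feasible case.) -/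
/-!
For any weights `w`, moving every arm on one side of `γ` to `γ` (a limit of alternatives, by
continuity of `d`) costs at most `W⁺ d(M,γ)` resp. `W⁻ d(m,γ)`, where `W⁺ + W⁻ = 1` are the masses
on the two sides; the smaller of the two is at most the harmonic-type mean
`(d(m,γ)⁻¹ + d(M,γ)⁻¹)⁻¹`. Conversely, putting weight proportional to `d(m,γ)⁻¹` on an arm with
mean `m` and to `d(M,γ)⁻¹` on one with mean `M` attains this value, since any alternative must
move one of these two arms across `γ`.
-/

open Filter Topology Finset

theorem csInf_le_of_tendsto {α β : Type*} [ConditionallyCompleteLinearOrder α] [TopologicalSpace α]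
    [OrderTopology α] {l : Filter β} [l.NeBot] {g : β → α} {S : Set α} {x : α}
    (hS : BddBelow S) (hg : Tendsto g l (𝓝 x)) (hmem : ∀ᶠ t in l, g t ∈ S) : sInf S ≤ x :=
  ge_of_tendsto hg (hmem.mono fun _ ht => csInf_le hS ht)

theorem min_mul_le_inv_add_inv_inv {a b x y : ℝ} (ha : 0 < a) (hb : 0 < b) (hxy : x + y = 1) :
    min (x * a) (y * b) ≤ (a⁻¹ + b⁻¹)⁻¹ := by
  by_contra! h
  have hx : (a⁻¹ + b⁻¹)⁻¹ * a⁻¹ < x := by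
    rw [← div_eq_mul_inv, div_lt_iff₀ ha]; exact (lt_min_iff.1 h).1
  have hy : (a⁻¹ + b⁻¹)⁻¹ * b⁻¹ < y := by
    rw [← div_eq_mul_inv, div_lt_iff₀ hb]; exact (lt_min_iff.1 h).2
  have : (a⁻¹ + b⁻¹)⁻¹ * (a⁻¹ + b⁻¹) = 1 := inv_mul_cancel₀ (by positivity)
  linarith

theorem exists_weights_of_ne {ι : Type*} [Fintype ι] [DecidableEq ι] {i j : ι} (hij : i ≠ j)
    {p q : ℝ} (hp : 0 ≤ p) (hq : 0 ≤ q) (hpq : p + q = 1) :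
    ∃ w : ι → ℝ, (∀ a, 0 ≤ w a) ∧ ∑ a, w a = 1 ∧ w i = p ∧ w j = q := by
  refine ⟨Pi.single i p + Pi.single j q, fun a => ?_, ?_, by simp [hij], by simp [hij.symm]⟩
  · simp only [Pi.add_apply, Pi.single_apply]
    positivity
  · simpa [sum_add_distrib] using hpq

section AltDivergence

variable {ι : Type*} [Fintype ι] {d : ℝ → ℝ → ℝ} {μ w : ι → ℝ} {γ : ℝ}

/-- `inf_{λ ∈ Alt(μ)} ∑ₐ wₐ d(μₐ, λₐ)` -/
noncomputable def altDivergence (d : ℝ → ℝ → ℝ) (μ : ι → ℝ) (γ : ℝ) (w : ι → ℝ) : ℝ :=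
  sInf {s : ℝ | ∃ lam : ι → ℝ, ((∀ a, lam a < γ) ∨ (∀ a, γ < lam a)) ∧
    s = ∑ a, w a * d (μ a) (lam a)}

theorem bddBelow_altDivergence_set (hd_nonneg : ∀ x y, 0 ≤ d x y) (hw : ∀ a, 0 ≤ w a) :
    BddBelow {s : ℝ | ∃ lam : ι → ℝ, ((∀ a, lam a < γ) ∨ (∀ a, γ < lam a)) ∧
      s = ∑ a, w a * d (μ a) (lam a)} := by
  refine ⟨0, ?_⟩
  rintro _ ⟨lam, -, rfl⟩
  exact sum_nonneg fun a _ => mul_nonneg (hw a) (hd_nonneg _ _)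

theorem altDivergence_le_sum_min (hd_nonneg : ∀ x y, 0 ≤ d x y)
    (hd_cont : ∀ x, Continuous fun y => d x y) (hw : ∀ a, 0 ≤ w a) :
    altDivergence d μ γ w ≤ ∑ a, w a * d (μ a) (min (μ a) γ) := by
  have hg : Continuous fun t => ∑ a, w a * d (μ a) (min (μ a) t) := by
    fun_prop (disch := exact hd_cont _)
  refine csInf_le_of_tendsto (bddBelow_altDivergence_set hd_nonneg hw)
    ((hg.tendsto γ).mono_left (nhdsWithin_le_nhds (s := Set.Iio γ))) ?_
  filter_upwards [self_mem_nhdsWithin] with t ht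
  exact ⟨fun a => min (μ a) t, Or.inl fun a => (min_le_right _ _).trans_lt ht, rfl⟩

theorem altDivergence_le_sum_max (hd_nonneg : ∀ x y, 0 ≤ d x y)
    (hd_cont : ∀ x, Continuous fun y => d x y) (hw : ∀ a, 0 ≤ w a) :
    altDivergence d μ γ w ≤ ∑ a, w a * d (μ a) (max (μ a) γ) := by
  have hg : Continuous fun t => ∑ a, w a * d (μ a) (max (μ a) t) := by
    fun_prop (disch := exact hd_cont _)
  refine csInf_le_of_tendsto (bddBelow_altDivergence_set hd_nonneg hw)
    ((hg.tendsto γ).mono_left (nhdsWithin_le_nhds (s := Set.Ioi γ))) ?_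
  filter_upwards [self_mem_nhdsWithin] with t ht
  exact ⟨fun a => max (μ a) t, Or.inr fun a => ht.trans_le (le_max_right _ _), rfl⟩

theorem sum_mul_min_le (hd_self : ∀ x, d x x = 0)
    (hd_mono_left_below : ∀ x x' l, l ≤ x' → x' ≤ x → d x' l ≤ d x l)
    {M : ℝ} (hM : ∀ a, μ a ≤ M) (hw : ∀ a, 0 ≤ w a) :
    ∑ a, w a * d (μ a) (min (μ a) γ) ≤ (∑ a with γ < μ a, w a) * d M γ := by
  rw [sum_filter, sum_mul]
  refine sum_le_sum fun a _ => ?_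
  split_ifs with h
  · rw [min_eq_right h.le]
    exact mul_le_mul_of_nonneg_left (hd_mono_left_below _ _ _ h.le (hM a)) (hw a)
  · rw [min_eq_left (not_lt.1 h), hd_self, mul_zero, zero_mul]

theorem sum_mul_max_le (hd_self : ∀ x, d x x = 0)
    (hd_mono_left_above : ∀ x x' l, x ≤ x' → x' ≤ l → d x' l ≤ d x l)
    {m : ℝ} (hm : ∀ a, m ≤ μ a) (hw : ∀ a, 0 ≤ w a) :
    ∑ a, w a * d (μ a) (max (μ a) γ) ≤ (∑ a with ¬γ < μ a, w a) * d m γ := by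
  rw [sum_filter, sum_mul]
  refine sum_le_sum fun a _ => ?_
  split_ifs with h
  · rw [max_eq_left h.le, hd_self, mul_zero, zero_mul]
  · rw [max_eq_right (not_lt.1 h)]
    exact mul_le_mul_of_nonneg_left (hd_mono_left_above _ _ _ (hm a) (not_lt.1 h)) (hw a)

theorem altDivergence_le (hd_nonneg : ∀ x y, 0 ≤ d x y) (hd_self : ∀ x, d x x = 0)
    (hd_cont : ∀ x, Continuous fun y => d x y)
    (hd_mono_left_above : ∀ x x' l, x ≤ x' → x' ≤ l → d x' l ≤ d x l)
    (hd_mono_left_below : ∀ x x' l, l ≤ x' → x' ≤ x → d x' l ≤ d x l)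
    {m M : ℝ} (hm : ∀ a, m ≤ μ a) (hM : ∀ a, μ a ≤ M) (hdm : 0 < d m γ) (hdM : 0 < d M γ)
    (hw : ∀ a, 0 ≤ w a) (hw_sum : ∑ a, w a = 1) :
    altDivergence d μ γ w ≤ ((d m γ)⁻¹ + (d M γ)⁻¹)⁻¹ :=
  calc altDivergence d μ γ w
      ≤ min (∑ a, w a * d (μ a) (max (μ a) γ)) (∑ a, w a * d (μ a) (min (μ a) γ)) :=
        le_min (altDivergence_le_sum_max hd_nonneg hd_cont hw)
          (altDivergence_le_sum_min hd_nonneg hd_cont hw)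
    _ ≤ min ((∑ a with ¬γ < μ a, w a) * d m γ) ((∑ a with γ < μ a, w a) * d M γ) :=
        min_le_min (sum_mul_max_le hd_self hd_mono_left_above hm hw)
          (sum_mul_min_le hd_self hd_mono_left_below hM hw)
    _ ≤ ((d m γ)⁻¹ + (d M γ)⁻¹)⁻¹ :=
        min_mul_le_inv_add_inv_inv hdm hdM <| by
          rw [add_comm, sum_filter_add_sum_filter_not, hw_sum]

theorem min_le_altDivergence (hd_nonneg : ∀ x y, 0 ≤ d x y)
    (hd_mono_right_above : ∀ x l l', x ≤ l → l ≤ l' → d x l ≤ d x l')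
    (hd_mono_right_below : ∀ x l l', l' ≤ l → l ≤ x → d x l ≤ d x l')
    (hw : ∀ a, 0 ≤ w a) {i j : ι} (hi : μ i < γ) (hj : γ < μ j) :
    min (w i * d (μ i) γ) (w j * d (μ j) γ) ≤ altDivergence d μ γ w := by
  have hterm : ∀ (lam : ι → ℝ) (k : ι), w k * d (μ k) (lam k) ≤ ∑ a, w a * d (μ a) (lam a) :=
    fun lam k => single_le_sum (fun a _ => mul_nonneg (hw a) (hd_nonneg _ _)) (mem_univ k)
  refine le_csInf ⟨_, fun _ => γ - 1, Or.inl fun _ => sub_one_lt γ, rfl⟩ ?_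
  rintro _ ⟨lam, hlam | hlam, rfl⟩
  · refine (min_le_right _ _).trans (le_trans ?_ (hterm lam j))
    exact mul_le_mul_of_nonneg_left
      (hd_mono_right_below _ _ _ (hlam j).le hj.le) (hw j)
  · refine (min_le_left _ _).trans (le_trans ?_ (hterm lam i))
    exact mul_le_mul_of_nonneg_left
      (hd_mono_right_above _ _ _ hi.le (hlam i).le) (hw i)

end AltDivergence

theorem chm_feasible_characteristic_time_general
    {K : ℕ} (d : ℝ → ℝ → ℝ)
    (hd_nonneg : ∀ x y, 0 ≤ d x y)
    (hd_eq_zero : ∀ x y, d x y = 0 ↔ x = y)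
    (hd_cont : ∀ x, Continuous fun y => d x y)
    (hd_mono_right_above : ∀ x l l', x ≤ l → l ≤ l' → d x l ≤ d x l')
    (hd_mono_right_below : ∀ x l l', l' ≤ l → l ≤ x → d x l ≤ d x l')
    (hd_mono_left_above : ∀ x x' l, x ≤ x' → x' ≤ l → d x' l ≤ d x l)
    (hd_mono_left_below : ∀ x x' l, l ≤ x' → x' ≤ x → d x' l ≤ d x l)
    (μ : Fin K → ℝ) (γ m M : ℝ)
    (hm_le : ∀ a, m ≤ μ a) (hm_mem : ∃ a, μ a = m)
    (hM_ge : ∀ a, μ a ≤ M) (hM_mem : ∃ a, μ a = M)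
    (hfeas₁ : m < γ) (hfeas₂ : γ < M) :
    sSup {v : ℝ | ∃ w : Fin K → ℝ, (∀ a, 0 ≤ w a) ∧ (∑ a, w a) = 1 ∧
        v = sInf {s : ℝ | ∃ lam : Fin K → ℝ,
          ((∀ a, lam a < γ) ∨ (∀ a, γ < lam a)) ∧
          s = ∑ a, w a * d (μ a) (lam a)}} =
      ((d m γ)⁻¹ + (d M γ)⁻¹)⁻¹ := by
  obtain ⟨i, rfl⟩ := hm_mem
  obtain ⟨j, rfl⟩ := hM_mem
  have hd_self : ∀ x, d x x = 0 := fun x => (hd_eq_zero x x).2 rfl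
  have hdi : 0 < d (μ i) γ := (hd_nonneg _ _).lt_of_ne' fun h => hfeas₁.ne ((hd_eq_zero _ _).1 h)
  have hdj : 0 < d (μ j) γ := (hd_nonneg _ _).lt_of_ne' fun h => hfeas₂.ne' ((hd_eq_zero _ _).1 h)
  set c := ((d (μ i) γ)⁻¹ + (d (μ j) γ)⁻¹)⁻¹
  have hij : i ≠ j := fun h => (hfeas₁.trans hfeas₂).ne (congrArg μ h)
  have hupper : ∀ w : Fin K → ℝ, (∀ a, 0 ≤ w a) → ∑ a, w a = 1 → altDivergence d μ γ w ≤ c :=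
    fun w hw hw_sum => altDivergence_le hd_nonneg hd_self hd_cont hd_mono_left_above
      hd_mono_left_below hm_le hM_ge hdi hdj hw hw_sum
  obtain ⟨w, hw, hw_sum, hwi, hwj⟩ := exists_weights_of_ne hij (p := c / d (μ i) γ)
    (q := c / d (μ j) γ) (by positivity) (by positivity) <| by
      rw [div_eq_mul_inv, div_eq_mul_inv, ← mul_add, inv_mul_cancel₀ (by positivity)]
  have hlower : c ≤ altDivergence d μ γ w := by
    have := min_le_altDivergence hd_nonneg hd_mono_right_above hd_mono_right_below hw
      hfeas₁ hfeas₂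
    rwa [hwi, hwj, div_mul_cancel₀ _ hdi.ne', div_mul_cancel₀ _ hdj.ne', min_self] at this
  refine IsGreatest.csSup_eq ⟨⟨w, hw, hw_sum, le_antisymm hlower (hupper w hw hw_sum)⟩, ?_⟩
  rintro _ ⟨w', hw', hw'_sum, rfl⟩
  exact hupper w' hw' hw'_sum

/-- Theorem 1 (feasible case): the sup-inf value of the pure exploration game
for the one-dimensional CHM problem when `γ` lies in the convex hull of the means. -/
theorem chm_feasible_characteristic_time
    {K : ℕ} (hK : 2 ≤ K) (d : ℝ → ℝ → ℝ)
    (hd_nonneg : ∀ x y, 0 ≤ d x y)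
    (hd_eq_zero : ∀ x y, d x y = 0 ↔ x = y)
    (hd_cont : ∀ x, Continuous fun y => d x y)
    (hd_mono_right_above : ∀ x l l', x ≤ l → l ≤ l' → d x l ≤ d x l')
    (hd_mono_right_below : ∀ x l l', l' ≤ l → l ≤ x → d x l ≤ d x l')
    (hd_mono_left_above : ∀ x x' l, x ≤ x' → x' ≤ l → d x' l ≤ d x l)
    (hd_mono_left_below : ∀ x x' l, l ≤ x' → x' ≤ x → d x' l ≤ d x l)
    (μ : Fin K → ℝ) (γ m M : ℝ)
    (hm_le : ∀ a, m ≤ μ a) (hm_mem : ∃ a, μ a = m)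
    (hM_ge : ∀ a, μ a ≤ M) (hM_mem : ∃ a, μ a = M)
    (hfeas₁ : m < γ) (hfeas₂ : γ < M) (hne : ∀ a, μ a ≠ γ) :
    sSup {v : ℝ | ∃ w : Fin K → ℝ, (∀ a, 0 ≤ w a) ∧ (∑ a, w a) = 1 ∧
        v = sInf {s : ℝ | ∃ lam : Fin K → ℝ,
          ((∀ a, lam a < γ) ∨ (∀ a, γ < lam a)) ∧
          s = ∑ a, w a * d (μ a) (lam a)}} =
      ((d m γ)⁻¹ + (d M γ)⁻¹)⁻¹ :=
  chm_feasible_characteristic_time_general d hd_nonneg hd_eq_zero hd_cont hd_mono_right_above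
    hd_mono_right_below hd_mono_left_above hd_mono_left_below μ γ m M hm_le hm_mem hM_ge hM_mem
    hfeas₁ hfeas₂
end

section
/- Let d : ℝ × ℝ → ℝ be a divergence function satisfying properties (i)–(iv). Let K ≥ 2, let μ ∈ ℝ^K have a unique minimizing index a₁ and a unique maximizing index a_K, write m = μ_{a₁}, M = μ_{a_K}, and let γ ∈ ℝ satisfy m < γ < M and μ_a ≠ γ for every a. Define w* ∈ Δ_K by w*_{a₁} = d(m,γ)^{-1} / ( d(m,γ)^{-1} + d(M,γ)^{-1} ), w*_{a_K} = d(M,γ)^{-1} / ( d(m,γ)^{-1} + d(M,γ)^{-1} ), and w*_a = 0 for all other a. Then inf_{λ ∈ Alt(μ)} Σ_{a=1}^K w*_a · d(μ_a, λ_a) = ( d(m,γ)^{-1} + d(M,γ)^{-1} )^{-1}, so w* attains the sup-inf value sup_{w ∈ Δ_K} inf_{λ ∈ Alt(μ)} Σ_a w_a d(μ_a,λ_a). (Theorem 1, feasible case: oracle weights.) -/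
/-!
For `λ ∈ Alt(μ)` every coordinate of `λ` lies on one side of `γ`, so by monotonicity of `d` in
its second argument the weighted divergence of `w*` is at least
`min (w*_{a₁} d(m,γ)) (w*_{a_K} d(M,γ))`, and `w*` is chosen to make both terms equal to
`(d(m,γ)⁻¹ + d(M,γ)⁻¹)⁻¹`. Conversely, for any `w ∈ Δ_K`, letting `λ` tend to `(min (μ_a) γ)_a`
from inside `Alt(μ)` costs at most `q · d(M,γ)`, where `q` is the mass that `w` puts on arms above
`γ`, and symmetrically with `(max (μ_a) γ)_a` at most `(1 - q) · d(m,γ)`; the smaller of the two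
is at most `(d(m,γ)⁻¹ + d(M,γ)⁻¹)⁻¹`.
-/

lemma le_inv_add_inv_inv_of_le_mul {x p q A B : ℝ} (hA : 0 < A) (hB : 0 < B) (hpq : p + q = 1)
    (hp : x ≤ p * A) (hq : x ≤ q * B) : x ≤ (A⁻¹ + B⁻¹)⁻¹ := by
  have hp' : x * A⁻¹ ≤ p := by rwa [← div_eq_mul_inv, div_le_iff₀ hA]
  have hq' : x * B⁻¹ ≤ q := by rwa [← div_eq_mul_inv, div_le_iff₀ hB]
  rw [← one_div, le_div_iff₀ (by positivity)]
  linarith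

section Alt

variable {ι : Type*} [Fintype ι]

def alt (γ : ℝ) : Set (ι → ℝ) := {lam | (∀ a, lam a < γ) ∨ (∀ a, γ < lam a)}

noncomputable def altInf (d : ℝ → ℝ → ℝ) (γ : ℝ) (μ w : ι → ℝ) : ℝ :=
  sInf {s : ℝ | ∃ lam : ι → ℝ, lam ∈ alt γ ∧ s = ∑ a, w a * d (μ a) (lam a)}

variable {d : ℝ → ℝ → ℝ} {γ : ℝ} {μ w : ι → ℝ}

lemma altInf_le (hd_nonneg : ∀ x y, 0 ≤ d x y) (hw : ∀ a, 0 ≤ w a) {lam : ι → ℝ}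
    (hlam : lam ∈ alt γ) : altInf d γ μ w ≤ ∑ a, w a * d (μ a) (lam a) := by
  refine csInf_le ⟨0, ?_⟩ ⟨lam, hlam, rfl⟩
  rintro s ⟨lam', -, rfl⟩
  exact Finset.sum_nonneg fun a _ => mul_nonneg (hw a) (hd_nonneg _ _)

lemma le_altInf {c : ℝ} (h : ∀ lam ∈ alt γ, c ≤ ∑ a, w a * d (μ a) (lam a)) :
    c ≤ altInf d γ μ w := by
  refine le_csInf ⟨_, fun _ => γ - 1, Or.inl fun _ => sub_one_lt γ, rfl⟩ ?_
  rintro s ⟨lam, hlam, rfl⟩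
  exact h lam hlam

lemma altInf_le_sum_min (hd_nonneg : ∀ x y, 0 ≤ d x y) (hd_cont : ∀ x, Continuous fun y => d x y)
    (hw : ∀ a, 0 ≤ w a) : altInf d γ μ w ≤ ∑ a, w a * d (μ a) (min (μ a) γ) := by
  have hcont : Continuous fun y => ∑ a, w a * d (μ a) (min (μ a) y) := by fun_prop
  refine ge_of_tendsto ((hcont.tendsto γ).mono_left (nhdsWithin_le_nhds (s := Set.Iio γ))) ?_
  filter_upwards [self_mem_nhdsWithin] with y (hy : y < γ)
  exact altInf_le hd_nonneg hw (Or.inl fun a => (min_le_right _ _).trans_lt hy)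

lemma altInf_le_sum_max (hd_nonneg : ∀ x y, 0 ≤ d x y) (hd_cont : ∀ x, Continuous fun y => d x y)
    (hw : ∀ a, 0 ≤ w a) : altInf d γ μ w ≤ ∑ a, w a * d (μ a) (max (μ a) γ) := by
  have hcont : Continuous fun y => ∑ a, w a * d (μ a) (max (μ a) y) := by fun_prop
  refine ge_of_tendsto ((hcont.tendsto γ).mono_left (nhdsWithin_le_nhds (s := Set.Ioi γ))) ?_
  filter_upwards [self_mem_nhdsWithin] with y (hy : γ < y)
  exact altInf_le hd_nonneg hw (Or.inr fun a => hy.trans_le (le_max_right _ _))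

lemma altInf_le_sum_filter_lt_mul (hd_nonneg : ∀ x y, 0 ≤ d x y) (hd_self : ∀ x, d x x = 0)
    (hd_cont : ∀ x, Continuous fun y => d x y) (hw : ∀ a, 0 ≤ w a) {M : ℝ}
    (hM : ∀ a, γ < μ a → d (μ a) γ ≤ d M γ) :
    altInf d γ μ w ≤ (∑ a ∈ Finset.univ.filter (fun a => γ < μ a), w a) * d M γ := by
  refine (altInf_le_sum_min hd_nonneg hd_cont hw).trans ?_
  rw [Finset.sum_mul, Finset.sum_filter]
  refine Finset.sum_le_sum fun a _ => ?_
  split_ifs with h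
  · rw [min_eq_right h.le]
    exact mul_le_mul_of_nonneg_left (hM a h) (hw a)
  · rw [min_eq_left (not_lt.1 h), hd_self, mul_zero]

lemma altInf_le_sum_filter_not_lt_mul (hd_nonneg : ∀ x y, 0 ≤ d x y) (hd_self : ∀ x, d x x = 0)
    (hd_cont : ∀ x, Continuous fun y => d x y) (hw : ∀ a, 0 ≤ w a) {m : ℝ}
    (hm : ∀ a, μ a ≤ γ → d (μ a) γ ≤ d m γ) :
    altInf d γ μ w ≤ (∑ a ∈ Finset.univ.filter (fun a => ¬ γ < μ a), w a) * d m γ := by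
  refine (altInf_le_sum_max hd_nonneg hd_cont hw).trans ?_
  rw [Finset.sum_mul, Finset.sum_filter]
  refine Finset.sum_le_sum fun a _ => ?_
  split_ifs with h
  · rw [max_eq_left h.le, hd_self, mul_zero]
  · rw [max_eq_right (not_lt.1 h)]
    exact mul_le_mul_of_nonneg_left (hm a (not_lt.1 h)) (hw a)

lemma altInf_le_inv_add_inv_inv (hd_nonneg : ∀ x y, 0 ≤ d x y) (hd_self : ∀ x, d x x = 0)
    (hd_cont : ∀ x, Continuous fun y => d x y)
    (hd_mono_left_above : ∀ x x' l, x ≤ x' → x' ≤ l → d x' l ≤ d x l)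
    (hd_mono_left_below : ∀ x x' l, l ≤ x' → x' ≤ x → d x' l ≤ d x l)
    {m M : ℝ} (hdm : 0 < d m γ) (hdM : 0 < d M γ) (hμm : ∀ a, m ≤ μ a) (hμM : ∀ a, μ a ≤ M)
    (hw : w ∈ stdSimplex ℝ ι) : altInf d γ μ w ≤ ((d m γ)⁻¹ + (d M γ)⁻¹)⁻¹ := by
  refine le_inv_add_inv_inv_of_le_mul hdm hdM ?_
    (altInf_le_sum_filter_not_lt_mul hd_nonneg hd_self hd_cont hw.1
      fun a ha => hd_mono_left_above _ _ _ (hμm a) ha)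
    (altInf_le_sum_filter_lt_mul hd_nonneg hd_self hd_cont hw.1
      fun a ha => hd_mono_left_below _ _ _ ha.le (hμM a))
  rw [add_comm, Finset.sum_filter_add_sum_filter_not]
  exact hw.2

lemma min_mul_le_altInf (hd_nonneg : ∀ x y, 0 ≤ d x y)
    (hd_mono_right_above : ∀ x l l', x ≤ l → l ≤ l' → d x l ≤ d x l')
    (hd_mono_right_below : ∀ x l l', l' ≤ l → l ≤ x → d x l ≤ d x l')
    (hw : ∀ a, 0 ≤ w a) {i j : ι} (hi : μ i ≤ γ) (hj : γ ≤ μ j) :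
    min (w i * d (μ i) γ) (w j * d (μ j) γ) ≤ altInf d γ μ w := by
  refine le_altInf fun lam hlam => ?_
  have hterm (a : ι) : w a * d (μ a) (lam a) ≤ ∑ b, w b * d (μ b) (lam b) :=
    Finset.single_le_sum (f := fun b => w b * d (μ b) (lam b))
      (fun b _ => mul_nonneg (hw b) (hd_nonneg _ _)) (Finset.mem_univ a)
  rcases hlam with hlt | hgt
  · refine (min_le_right _ _).trans (le_trans ?_ (hterm j))
    exact mul_le_mul_of_nonneg_left (hd_mono_right_below _ _ _ (hlt j).le hj) (hw j)
  · refine (min_le_left _ _).trans (le_trans ?_ (hterm i))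
    exact mul_le_mul_of_nonneg_left (hd_mono_right_above _ _ _ hi (hgt i).le) (hw i)

lemma ite_ite_mem_stdSimplex [DecidableEq ι] {i j : ι} (hij : i ≠ j) {p q : ℝ} (hp : 0 ≤ p)
    (hq : 0 ≤ q) (hpq : p + q = 1) :
    (fun a => if a = i then p else if a = j then q else 0) ∈ stdSimplex ℝ ι := by
  refine ⟨fun a => by dsimp only; split_ifs; exacts [hp, hq, le_rfl], ?_⟩
  rw [Fintype.sum_eq_add i j hij fun a ha => by simp [ha.1, ha.2]]
  simpa only [if_pos, if_neg hij.symm] using hpq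

end Alt

theorem chm_feasible_oracle_weights_general
    {K : ℕ} (d : ℝ → ℝ → ℝ)
    (hd_nonneg : ∀ x y, 0 ≤ d x y)
    (hd_eq_zero : ∀ x y, d x y = 0 ↔ x = y)
    (hd_cont : ∀ x, Continuous fun y => d x y)
    (hd_mono_right_above : ∀ x l l', x ≤ l → l ≤ l' → d x l ≤ d x l')
    (hd_mono_right_below : ∀ x l l', l' ≤ l → l ≤ x → d x l ≤ d x l')
    (hd_mono_left_above : ∀ x x' l, x ≤ x' → x' ≤ l → d x' l ≤ d x l)
    (hd_mono_left_below : ∀ x x' l, l ≤ x' → x' ≤ x → d x' l ≤ d x l)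
    (μ : Fin K → ℝ) (γ m M : ℝ) (a₁ aK : Fin K)
    (ha₁_min : ∀ a, a ≠ a₁ → μ a₁ < μ a)
    (haK_max : ∀ a, a ≠ aK → μ a < μ aK)
    (hm : μ a₁ = m) (hM : μ aK = M)
    (hfeas₁ : m < γ) (hfeas₂ : γ < M)
    (wstar : Fin K → ℝ)
    (hwstar : wstar = fun a =>
      if a = a₁ then (d m γ)⁻¹ / ((d m γ)⁻¹ + (d M γ)⁻¹)
      else if a = aK then (d M γ)⁻¹ / ((d m γ)⁻¹ + (d M γ)⁻¹)
      else 0) :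
    sInf {s : ℝ | ∃ lam : Fin K → ℝ,
        ((∀ a, lam a < γ) ∨ (∀ a, γ < lam a)) ∧
        s = ∑ a, wstar a * d (μ a) (lam a)} =
      ((d m γ)⁻¹ + (d M γ)⁻¹)⁻¹ ∧
    sInf {s : ℝ | ∃ lam : Fin K → ℝ,
        ((∀ a, lam a < γ) ∨ (∀ a, γ < lam a)) ∧
        s = ∑ a, wstar a * d (μ a) (lam a)} =
      sSup {v : ℝ | ∃ w : Fin K → ℝ, (∀ a, 0 ≤ w a) ∧ (∑ a, w a) = 1 ∧
        v = sInf {s : ℝ | ∃ lam : Fin K → ℝ,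
          ((∀ a, lam a < γ) ∨ (∀ a, γ < lam a)) ∧
          s = ∑ a, w a * d (μ a) (lam a)}} := by
  have hdm : 0 < d m γ := (hd_nonneg m γ).lt_of_ne' fun h => hfeas₁.ne ((hd_eq_zero m γ).1 h)
  have hdM : 0 < d M γ := (hd_nonneg M γ).lt_of_ne' fun h => hfeas₂.ne' ((hd_eq_zero M γ).1 h)
  have hane : a₁ ≠ aK := fun h => (hfeas₁.trans hfeas₂).ne (hm ▸ hM ▸ congrArg μ h)
  have hμm (a : Fin K) : m ≤ μ a :=
    hm ▸ (eq_or_ne a a₁).elim (fun h => h ▸ le_rfl) fun h => (ha₁_min a h).le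
  have hμM (a : Fin K) : μ a ≤ M :=
    hM ▸ (eq_or_ne a aK).elim (fun h => h ▸ le_rfl) fun h => (haK_max a h).le
  have hupper (w : Fin K → ℝ) (hw : w ∈ stdSimplex ℝ (Fin K)) :
      altInf d γ μ w ≤ ((d m γ)⁻¹ + (d M γ)⁻¹)⁻¹ :=
    altInf_le_inv_add_inv_inv hd_nonneg (fun x => (hd_eq_zero x x).2 rfl) hd_cont
      hd_mono_left_above hd_mono_left_below hdm hdM hμm hμM hw
  have hwstar_mem : wstar ∈ stdSimplex ℝ (Fin K) :=
    hwstar ▸ ite_ite_mem_stdSimplex hane (by positivity) (by positivity)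
      (by rw [← add_div, div_self (by positivity)])
  have hwstar_a₁ : wstar a₁ * d m γ = ((d m γ)⁻¹ + (d M γ)⁻¹)⁻¹ := by
    simp only [hwstar, if_pos]
    rw [div_mul_eq_mul_div, inv_mul_cancel₀ hdm.ne', one_div]
  have hwstar_aK : wstar aK * d M γ = ((d m γ)⁻¹ + (d M γ)⁻¹)⁻¹ := by
    simp only [hwstar, if_neg hane.symm, if_pos]
    rw [div_mul_eq_mul_div, inv_mul_cancel₀ hdM.ne', one_div]
  have hInf : altInf d γ μ wstar = ((d m γ)⁻¹ + (d M γ)⁻¹)⁻¹ := by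
    refine le_antisymm (hupper wstar hwstar_mem) ?_
    have := min_mul_le_altInf hd_nonneg hd_mono_right_above hd_mono_right_below hwstar_mem.1
      (hm ▸ hfeas₁.le : μ a₁ ≤ γ) (hM ▸ hfeas₂.le : γ ≤ μ aK)
    rwa [hm, hM, hwstar_a₁, hwstar_aK, min_self] at this
  refine ⟨hInf, hInf.trans (IsGreatest.csSup_eq ?_).symm⟩
  refine ⟨⟨wstar, hwstar_mem.1, hwstar_mem.2, hInf.symm⟩, ?_⟩
  rintro v ⟨w, hw0, hw1, rfl⟩
  exact hupper w ⟨hw0, hw1⟩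

/-- Theorem 1 (feasible case, oracle weights): the weight vector putting mass
inversely proportional to `d(m,γ)` and `d(M,γ)` on the unique minimizing and
maximizing arms attains the sup-inf value of the pure exploration game. -/
theorem chm_feasible_oracle_weights
    {K : ℕ} (hK : 2 ≤ K) (d : ℝ → ℝ → ℝ)
    (hd_nonneg : ∀ x y, 0 ≤ d x y)
    (hd_eq_zero : ∀ x y, d x y = 0 ↔ x = y)
    (hd_cont : ∀ x, Continuous fun y => d x y)
    (hd_mono_right_above : ∀ x l l', x ≤ l → l ≤ l' → d x l ≤ d x l')
    (hd_mono_right_below : ∀ x l l', l' ≤ l → l ≤ x → d x l ≤ d x l')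
    (hd_mono_left_above : ∀ x x' l, x ≤ x' → x' ≤ l → d x' l ≤ d x l)
    (hd_mono_left_below : ∀ x x' l, l ≤ x' → x' ≤ x → d x' l ≤ d x l)
    (μ : Fin K → ℝ) (γ m M : ℝ) (a₁ aK : Fin K)
    (ha₁_min : ∀ a, a ≠ a₁ → μ a₁ < μ a)
    (haK_max : ∀ a, a ≠ aK → μ a < μ aK)
    (hm : μ a₁ = m) (hM : μ aK = M)
    (hfeas₁ : m < γ) (hfeas₂ : γ < M) (hne : ∀ a, μ a ≠ γ)
    (wstar : Fin K → ℝ)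
    (hwstar : wstar = fun a =>
      if a = a₁ then (d m γ)⁻¹ / ((d m γ)⁻¹ + (d M γ)⁻¹)
      else if a = aK then (d M γ)⁻¹ / ((d m γ)⁻¹ + (d M γ)⁻¹)
      else 0) :
    sInf {s : ℝ | ∃ lam : Fin K → ℝ,
        ((∀ a, lam a < γ) ∨ (∀ a, γ < lam a)) ∧
        s = ∑ a, wstar a * d (μ a) (lam a)} =
      ((d m γ)⁻¹ + (d M γ)⁻¹)⁻¹ ∧
    sInf {s : ℝ | ∃ lam : Fin K → ℝ,
        ((∀ a, lam a < γ) ∨ (∀ a, γ < lam a)) ∧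
        s = ∑ a, wstar a * d (μ a) (lam a)} =
      sSup {v : ℝ | ∃ w : Fin K → ℝ, (∀ a, 0 ≤ w a) ∧ (∑ a, w a) = 1 ∧
        v = sInf {s : ℝ | ∃ lam : Fin K → ℝ,
          ((∀ a, lam a < γ) ∨ (∀ a, γ < lam a)) ∧
          s = ∑ a, w a * d (μ a) (lam a)}} :=
  chm_feasible_oracle_weights_general d hd_nonneg hd_eq_zero hd_cont hd_mono_right_above
    hd_mono_right_below hd_mono_left_above hd_mono_left_below μ γ m M a₁ aK ha₁_min haK_max hm hM
    hfeas₁ hfeas₂ wstar hwstar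
end

section
/- Let d : ℝ × ℝ → ℝ be a divergence function satisfying properties (i)–(iii). Let K ≥ 1, let μ ∈ ℝ^K, and let γ ∈ ℝ satisfy γ < min_a μ_a or γ > max_a μ_a (so μ is γ-infeasible). Then sup_{w ∈ Δ_K} inf_{λ ∈ Alt(μ)} Σ_{a=1}^K w_a · d(μ_a, λ_a) = ( Σ_{a=1}^K d(μ_a,γ)^{-1} )^{-1}; equivalently, the characteristic time T*(μ), defined as the reciprocal of this sup-inf value, equals Σ_{a=1}^K 1/d(μ_a,γ). (Theorem 1, infeasible case.) -/
/-!
For a fixed weight vector `w`, the cheapest alternative moves a single arm onto `γ`: an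
alternative must put some arm on the far side of `γ`, and by monotonicity of `d` that arm alone
already costs at least `w a * d (μ a) γ`. The inner infimum is therefore
`min_a w a * d (μ a) γ`, and maximising this minimum over the simplex equalises the terms,
`w a ∝ (d (μ a) γ)⁻¹`.
-/

open Finset

section AlternativeInfimum

variable {ι : Type*} {d : ℝ → ℝ → ℝ} {μ w : ι → ℝ} {γ : ℝ}

lemma sum_mul_divergence_update_eq [Fintype ι] [DecidableEq ι] (hd_self : ∀ x, d x x = 0)
    (b : ι) : ∑ a, w a * d (μ a) (Function.update μ b γ a) = w b * d (μ b) γ := by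
  rw [sum_eq_single b (fun a _ hab => by simp [Function.update_of_ne hab, hd_self]) (by simp)]
  simp

lemma exists_divergence_le_of_mem_alt
    (hd_mono_right_above : ∀ x l l', x ≤ l → l ≤ l' → d x l ≤ d x l')
    (hd_mono_right_below : ∀ x l l', l' ≤ l → l ≤ x → d x l ≤ d x l')
    (hinfeas : (∀ a, γ < μ a) ∨ (∀ a, μ a < γ)) {lam : ι → ℝ}
    (hlam : (∃ a, lam a ≤ γ) ∧ (∃ a, γ ≤ lam a)) :
    ∃ a, d (μ a) γ ≤ d (μ a) (lam a) := by
  obtain ⟨⟨a₁, ha₁⟩, ⟨a₂, ha₂⟩⟩ := hlam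
  rcases hinfeas with hbelow | habove
  · exact ⟨a₁, hd_mono_right_below _ _ _ ha₁ (hbelow a₁).le⟩
  · exact ⟨a₂, hd_mono_right_above _ _ _ (habove a₂).le ha₂⟩

lemma sInf_alt_eq_inf' [Fintype ι] [Nonempty ι] (hd_nonneg : ∀ x y, 0 ≤ d x y)
    (hd_self : ∀ x, d x x = 0)
    (hd_mono_right_above : ∀ x l l', x ≤ l → l ≤ l' → d x l ≤ d x l')
    (hd_mono_right_below : ∀ x l l', l' ≤ l → l ≤ x → d x l ≤ d x l')
    (hinfeas : (∀ a, γ < μ a) ∨ (∀ a, μ a < γ)) (hw : ∀ a, 0 ≤ w a) :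
    sInf {s : ℝ | ∃ lam : ι → ℝ, ((∃ a, lam a ≤ γ) ∧ (∃ a, γ ≤ lam a)) ∧
        s = ∑ a, w a * d (μ a) (lam a)} =
      univ.inf' univ_nonempty (fun a => w a * d (μ a) γ) := by
  classical
  have hcost_nonneg : ∀ lam : ι → ℝ, ∀ a, 0 ≤ w a * d (μ a) (lam a) :=
    fun lam a => mul_nonneg (hw a) (hd_nonneg _ _)
  have hmem : ∀ b, w b * d (μ b) γ ∈ {s : ℝ | ∃ lam : ι → ℝ,
      ((∃ a, lam a ≤ γ) ∧ (∃ a, γ ≤ lam a)) ∧ s = ∑ a, w a * d (μ a) (lam a)} :=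
    fun b =>
    ⟨Function.update μ b γ, ⟨⟨b, by simp⟩, ⟨b, by simp⟩⟩,
      (sum_mul_divergence_update_eq hd_self b).symm⟩
  refine le_antisymm ?_ ?_
  · obtain ⟨b, -, hb⟩ := exists_mem_eq_inf' univ_nonempty (fun a => w a * d (μ a) γ)
    rw [hb]
    refine csInf_le ⟨0, ?_⟩ (hmem b)
    rintro s ⟨lam, -, rfl⟩
    exact sum_nonneg fun a _ => hcost_nonneg lam a
  · refine le_csInf ⟨_, hmem (Classical.arbitrary ι)⟩ ?_
    rintro s ⟨lam, hlam, rfl⟩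
    obtain ⟨a, ha⟩ :=
      exists_divergence_le_of_mem_alt hd_mono_right_above hd_mono_right_below hinfeas hlam
    calc univ.inf' univ_nonempty (fun a => w a * d (μ a) γ) ≤ w a * d (μ a) γ :=
          inf'_le _ (mem_univ a)
      _ ≤ w a * d (μ a) (lam a) := mul_le_mul_of_nonneg_left ha (hw a)
      _ ≤ ∑ a, w a * d (μ a) (lam a) :=
          single_le_sum (fun a _ => hcost_nonneg lam a) (mem_univ a)

end AlternativeInfimum

section SimplexMaxMin

variable {ι : Type*} [Fintype ι] [Nonempty ι] {c : ι → ℝ}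

lemma inf'_mul_le_inv_sum_inv (hc : ∀ a, 0 < c a) {w : ι → ℝ} (hw1 : ∑ a, w a = 1) :
    univ.inf' univ_nonempty (fun a => w a * c a) ≤ (∑ a, (c a)⁻¹)⁻¹ := by
  set m := univ.inf' univ_nonempty (fun a => w a * c a)
  have hS : 0 < ∑ a, (c a)⁻¹ := sum_pos (fun a _ => inv_pos.2 (hc a)) univ_nonempty
  have hm : ∀ a, m / c a ≤ w a := fun a =>
    (div_le_iff₀ (hc a)).2 (inf'_le _ (mem_univ a))
  rw [← one_div, le_div_iff₀ hS, mul_sum]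
  calc ∑ a, m * (c a)⁻¹ ≤ ∑ a, w a := sum_le_sum fun a _ => hm a
    _ = 1 := hw1

lemma isGreatest_simplex_inf'_mul (hc : ∀ a, 0 < c a) :
    IsGreatest {v : ℝ | ∃ w : ι → ℝ, (∀ a, 0 ≤ w a) ∧ (∑ a, w a) = 1 ∧
      v = univ.inf' univ_nonempty (fun a => w a * c a)} (∑ a, (c a)⁻¹)⁻¹ := by
  have hS : 0 < ∑ a, (c a)⁻¹ := sum_pos (fun a _ => inv_pos.2 (hc a)) univ_nonempty
  refine ⟨⟨fun a => (c a)⁻¹ * (∑ b, (c b)⁻¹)⁻¹, fun a => by positivity [hc a], ?_, ?_⟩, ?_⟩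
  · rw [← sum_mul, mul_inv_cancel₀ hS.ne']
  · simp only [mul_right_comm _ _ (c _), inv_mul_cancel₀ (hc _).ne', one_mul, inf'_const]
  · rintro v ⟨w, -, hw1, rfl⟩
    exact inf'_mul_le_inv_sum_inv hc hw1

end SimplexMaxMin

theorem chm_infeasible_characteristic_time_general
    {K : ℕ} (hK : 1 ≤ K) (d : ℝ → ℝ → ℝ)
    (hd_nonneg : ∀ x y, 0 ≤ d x y)
    (hd_eq_zero : ∀ x y, d x y = 0 ↔ x = y)
    (hd_mono_right_above : ∀ x l l', x ≤ l → l ≤ l' → d x l ≤ d x l')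
    (hd_mono_right_below : ∀ x l l', l' ≤ l → l ≤ x → d x l ≤ d x l')
    (μ : Fin K → ℝ) (γ : ℝ)
    (hinfeas : (∀ a, γ < μ a) ∨ (∀ a, μ a < γ)) :
    sSup {v : ℝ | ∃ w : Fin K → ℝ, (∀ a, 0 ≤ w a) ∧ (∑ a, w a) = 1 ∧
        v = sInf {s : ℝ | ∃ lam : Fin K → ℝ,
          ((∃ a, lam a ≤ γ) ∧ (∃ a, γ ≤ lam a)) ∧
          s = ∑ a, w a * d (μ a) (lam a)}} =
      (∑ a, (d (μ a) γ)⁻¹)⁻¹ := by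
  have : Nonempty (Fin K) := ⟨⟨0, hK⟩⟩
  have hd_self : ∀ x, d x x = 0 := fun x => (hd_eq_zero x x).2 rfl
  have hμ_ne : ∀ a, μ a ≠ γ := fun a => hinfeas.elim (fun h => (h a).ne') (fun h => (h a).ne)
  have hc : ∀ a, 0 < d (μ a) γ := fun a =>
    (hd_nonneg _ _).lt_of_ne' fun h => hμ_ne a ((hd_eq_zero _ _).1 h)
  rw [← (isGreatest_simplex_inf'_mul hc).csSup_eq]
  congr 1
  refine Set.ext fun v =>
    exists_congr fun w => and_congr_right fun hw => and_congr_right fun _ => ?_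
  rw [sInf_alt_eq_inf' hd_nonneg hd_self hd_mono_right_above hd_mono_right_below hinfeas hw]

/-- Theorem 1 (infeasible case): the sup-inf value of the pure exploration game
for the one-dimensional CHM problem when `γ` lies outside the convex hull of the means. -/
theorem chm_infeasible_characteristic_time
    {K : ℕ} (hK : 1 ≤ K) (d : ℝ → ℝ → ℝ)
    (hd_nonneg : ∀ x y, 0 ≤ d x y)
    (hd_eq_zero : ∀ x y, d x y = 0 ↔ x = y)
    (hd_cont : ∀ x, Continuous fun y => d x y)
    (hd_mono_right_above : ∀ x l l', x ≤ l → l ≤ l' → d x l ≤ d x l')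
    (hd_mono_right_below : ∀ x l l', l' ≤ l → l ≤ x → d x l ≤ d x l')
    (μ : Fin K → ℝ) (γ : ℝ)
    (hinfeas : (∀ a, γ < μ a) ∨ (∀ a, μ a < γ)) :
    sSup {v : ℝ | ∃ w : Fin K → ℝ, (∀ a, 0 ≤ w a) ∧ (∑ a, w a) = 1 ∧
        v = sInf {s : ℝ | ∃ lam : Fin K → ℝ,
          ((∃ a, lam a ≤ γ) ∧ (∃ a, γ ≤ lam a)) ∧
          s = ∑ a, w a * d (μ a) (lam a)}} =
      (∑ a, (d (μ a) γ)⁻¹)⁻¹ :=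
  chm_infeasible_characteristic_time_general hK d hd_nonneg hd_eq_zero hd_mono_right_above
    hd_mono_right_below μ γ hinfeas
end

section
/- Let d : ℝ × ℝ → ℝ be a divergence function satisfying properties (i)–(iii). Let K ≥ 1, let μ ∈ ℝ^K, and let γ ∈ ℝ satisfy γ < min_a μ_a or γ > max_a μ_a (so μ is γ-infeasible). Define w* ∈ Δ_K by w*_a = d(μ_a,γ)^{-1} / ( Σ_{i=1}^K d(μ_i,γ)^{-1} ) for every a. Then inf_{λ ∈ Alt(μ)} Σ_{a=1}^K w*_a · d(μ_a, λ_a) = ( Σ_{a=1}^K d(μ_a,γ)^{-1} )^{-1}, so w* attains the sup-inf value sup_{w ∈ Δ_K} inf_{λ ∈ Alt(μ)} Σ_a w_a d(μ_a,λ_a). (Theorem 1, infeasible case: oracle weights.) -/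
/-! For γ outside the hull of the means, every alternative `λ` puts some coordinate `λ_b` on
the far side of `γ` from `μ_b`, so by monotonicity of `d` its cost is at least `w_b d(μ_b, γ)`;
conversely moving a single coordinate onto `γ` costs exactly `w_b d(μ_b, γ)`. Hence the inner
infimum is `min_b w_b d(μ_b, γ)`. Over the simplex this minimum is largest, with value
`(∑ d(μ_i, γ)⁻¹)⁻¹`, when all the products `w_b d(μ_b, γ)` are equal, i.e. at `w*`. -/

open Finset

theorem exists_mul_le_inv_sum_inv {ι : Type*} [Fintype ι] [Nonempty ι] {x w : ι → ℝ}
    (hx : ∀ i, 0 < x i) (hw : ∑ i, w i = 1) : ∃ i, w i * x i ≤ (∑ i, (x i)⁻¹)⁻¹ := by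
  by_contra! h
  have hS : 0 < ∑ i, (x i)⁻¹ := sum_pos (fun i _ => inv_pos.mpr (hx i)) univ_nonempty
  have hlt : ∀ i ∈ univ, (∑ i, (x i)⁻¹)⁻¹ * (x i)⁻¹ < w i := fun i _ => by
    rw [← div_eq_mul_inv, div_lt_iff₀ (hx i)]
    exact h i
  have := sum_lt_sum_of_nonempty univ_nonempty hlt
  rw [← mul_sum, inv_mul_cancel₀ hS.ne', hw] at this
  exact lt_irrefl 1 this

theorem exists_le_of_mem_alt {ι : Type*} {d : ℝ → ℝ → ℝ} {μ : ι → ℝ} {γ : ℝ}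
    (hd_mono_right_above : ∀ x l l', x ≤ l → l ≤ l' → d x l ≤ d x l')
    (hd_mono_right_below : ∀ x l l', l' ≤ l → l ≤ x → d x l ≤ d x l')
    (hinfeas : (∀ a, γ ≤ μ a) ∨ (∀ a, μ a ≤ γ)) {lam : ι → ℝ}
    (hlam : (∃ a, lam a ≤ γ) ∧ (∃ a, γ ≤ lam a)) : ∃ b, d (μ b) γ ≤ d (μ b) (lam b) := by
  rcases hinfeas with hμ | hμ
  · obtain ⟨b, hb⟩ := hlam.1
    exact ⟨b, hd_mono_right_below _ _ _ hb (hμ b)⟩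
  · obtain ⟨b, hb⟩ := hlam.2
    exact ⟨b, hd_mono_right_above _ _ _ (hμ b) hb⟩

section Game

variable {ι : Type*} [Fintype ι] (d : ℝ → ℝ → ℝ) (μ : ι → ℝ) (γ : ℝ)

/-- The condition on `lam` says `γ ∈ Conv(lam)`, i.e. `lam ∈ Alt(μ)`. -/
def altCosts (w : ι → ℝ) : Set ℝ :=
  {s | ∃ lam : ι → ℝ, ((∃ a, lam a ≤ γ) ∧ (∃ a, γ ≤ lam a)) ∧ s = ∑ a, w a * d (μ a) (lam a)}

noncomputable def oracleWeights (a : ι) : ℝ :=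
  (d (μ a) γ)⁻¹ / ∑ i, (d (μ i) γ)⁻¹

variable {d μ γ}

theorem mul_mem_altCosts [DecidableEq ι] (hd_self : ∀ x, d x x = 0) (w : ι → ℝ) (b : ι) :
    w b * d (μ b) γ ∈ altCosts d μ γ w := by
  refine ⟨Function.update μ b γ, ⟨⟨b, by simp⟩, ⟨b, by simp⟩⟩, ?_⟩
  rw [sum_eq_single b (fun a _ hab => by rw [Function.update_of_ne hab, hd_self, mul_zero])
    (fun h => absurd (mem_univ b) h), Function.update_self]

theorem altCosts_nonneg (hd_nonneg : ∀ x y, 0 ≤ d x y) {w : ι → ℝ} (hw : ∀ a, 0 ≤ w a) :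
    ∀ s ∈ altCosts d μ γ w, 0 ≤ s := by
  rintro s ⟨lam, -, rfl⟩
  exact sum_nonneg fun a _ => mul_nonneg (hw a) (hd_nonneg _ _)

theorem sInf_altCosts_le (hd_nonneg : ∀ x y, 0 ≤ d x y) (hd_self : ∀ x, d x x = 0)
    {w : ι → ℝ} (hw : ∀ a, 0 ≤ w a) (b : ι) : sInf (altCosts d μ γ w) ≤ w b * d (μ b) γ := by
  classical
  exact csInf_le ⟨0, altCosts_nonneg hd_nonneg hw⟩ (mul_mem_altCosts hd_self w b)

theorem isLeast_altCosts_of_forall_mul_eq [Nonempty ι] (hd_nonneg : ∀ x y, 0 ≤ d x y)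
    (hd_self : ∀ x, d x x = 0)
    (hd_mono_right_above : ∀ x l l', x ≤ l → l ≤ l' → d x l ≤ d x l')
    (hd_mono_right_below : ∀ x l l', l' ≤ l → l ≤ x → d x l ≤ d x l')
    (hinfeas : (∀ a, γ ≤ μ a) ∨ (∀ a, μ a ≤ γ)) {w : ι → ℝ} (hw : ∀ a, 0 ≤ w a) {c : ℝ}
    (hc : ∀ b, w b * d (μ b) γ = c) : IsLeast (altCosts d μ γ w) c := by
  classical
  refine ⟨hc (Classical.arbitrary ι) ▸ mul_mem_altCosts hd_self w _, ?_⟩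
  rintro s ⟨lam, hlam, rfl⟩
  obtain ⟨b, hb⟩ := exists_le_of_mem_alt hd_mono_right_above hd_mono_right_below hinfeas hlam
  calc c = w b * d (μ b) γ := (hc b).symm
    _ ≤ w b * d (μ b) (lam b) := mul_le_mul_of_nonneg_left hb (hw b)
    _ ≤ ∑ a, w a * d (μ a) (lam a) :=
      single_le_sum (fun a _ => mul_nonneg (hw a) (hd_nonneg _ _)) (mem_univ b)

theorem oracleWeights_nonneg [Nonempty ι] (hpos : ∀ a, 0 < d (μ a) γ) (a : ι) : 0 ≤ oracleWeights d μ γ a :=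
  div_nonneg (inv_pos.mpr (hpos a)).le (sum_pos (fun i _ => inv_pos.mpr (hpos i)) univ_nonempty).le

theorem sum_oracleWeights [Nonempty ι] (hpos : ∀ a, 0 < d (μ a) γ) : ∑ a, oracleWeights d μ γ a = 1 := by
  simp only [oracleWeights]
  rw [← sum_div]
  exact div_self (sum_pos (fun i _ => inv_pos.mpr (hpos i)) univ_nonempty).ne'

theorem oracleWeights_mul (hpos : ∀ a, 0 < d (μ a) γ) (b : ι) :
    oracleWeights d μ γ b * d (μ b) γ = (∑ i, (d (μ i) γ)⁻¹)⁻¹ := by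
  rw [oracleWeights, div_mul_eq_mul_div, inv_mul_cancel₀ (hpos b).ne', one_div]

theorem isGreatest_sInf_altCosts [Nonempty ι] (hpos : ∀ a, 0 < d (μ a) γ)
    (hd_nonneg : ∀ x y, 0 ≤ d x y) (hd_self : ∀ x, d x x = 0)
    (hleast : IsLeast (altCosts d μ γ (oracleWeights d μ γ)) (∑ i, (d (μ i) γ)⁻¹)⁻¹) :
    IsGreatest {v | ∃ w : ι → ℝ, (∀ a, 0 ≤ w a) ∧ ∑ a, w a = 1 ∧ v = sInf (altCosts d μ γ w)}
      (∑ i, (d (μ i) γ)⁻¹)⁻¹ := by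
  refine ⟨⟨oracleWeights d μ γ, oracleWeights_nonneg hpos, sum_oracleWeights hpos,
    hleast.csInf_eq.symm⟩, ?_⟩
  rintro v ⟨w, hw, hw_sum, rfl⟩
  obtain ⟨b, hb⟩ := exists_mul_le_inv_sum_inv hpos hw_sum
  exact (sInf_altCosts_le hd_nonneg hd_self hw b).trans hb

end Game

theorem chm_infeasible_oracle_weights_general
    {K : ℕ} (hK : 1 ≤ K) (d : ℝ → ℝ → ℝ)
    (hd_nonneg : ∀ x y, 0 ≤ d x y)
    (hd_eq_zero : ∀ x y, d x y = 0 ↔ x = y)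
    (hd_mono_right_above : ∀ x l l', x ≤ l → l ≤ l' → d x l ≤ d x l')
    (hd_mono_right_below : ∀ x l l', l' ≤ l → l ≤ x → d x l ≤ d x l')
    (μ : Fin K → ℝ) (γ : ℝ)
    (hinfeas : (∀ a, γ < μ a) ∨ (∀ a, μ a < γ))
    (wstar : Fin K → ℝ)
    (hwstar : wstar = fun a => (d (μ a) γ)⁻¹ / ∑ i, (d (μ i) γ)⁻¹) :
    sInf {s : ℝ | ∃ lam : Fin K → ℝ,
        ((∃ a, lam a ≤ γ) ∧ (∃ a, γ ≤ lam a)) ∧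
        s = ∑ a, wstar a * d (μ a) (lam a)} =
      (∑ a, (d (μ a) γ)⁻¹)⁻¹ ∧
    sInf {s : ℝ | ∃ lam : Fin K → ℝ,
        ((∃ a, lam a ≤ γ) ∧ (∃ a, γ ≤ lam a)) ∧
        s = ∑ a, wstar a * d (μ a) (lam a)} =
      sSup {v : ℝ | ∃ w : Fin K → ℝ, (∀ a, 0 ≤ w a) ∧ (∑ a, w a) = 1 ∧
        v = sInf {s : ℝ | ∃ lam : Fin K → ℝ,
          ((∃ a, lam a ≤ γ) ∧ (∃ a, γ ≤ lam a)) ∧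
          s = ∑ a, w a * d (μ a) (lam a)}} := by
  have : Nonempty (Fin K) := ⟨⟨0, hK⟩⟩
  have hd_self : ∀ x, d x x = 0 := fun x => (hd_eq_zero x x).mpr rfl
  have hne : ∀ a, μ a ≠ γ := fun a => hinfeas.elim (fun h => (h a).ne') (fun h => (h a).ne)
  have hpos : ∀ a, 0 < d (μ a) γ := fun a =>
    (hd_nonneg _ _).lt_of_ne fun h => hne a ((hd_eq_zero _ _).mp h.symm)
  have hleast : IsLeast (altCosts d μ γ (oracleWeights d μ γ)) (∑ i, (d (μ i) γ)⁻¹)⁻¹ :=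
    isLeast_altCosts_of_forall_mul_eq hd_nonneg hd_self hd_mono_right_above hd_mono_right_below
      (hinfeas.imp (fun h a => (h a).le) (fun h a => (h a).le)) (oracleWeights_nonneg hpos)
      (oracleWeights_mul hpos)
  have hgreatest := isGreatest_sInf_altCosts hpos hd_nonneg hd_self hleast
  subst hwstar
  exact ⟨hleast.csInf_eq, hleast.csInf_eq.trans hgreatest.csSup_eq.symm⟩

/-- Theorem 1 (infeasible case, oracle weights): the weight vector allocating to each
arm a fraction inversely proportional to `d(μ_a,γ)` attains the sup-inf value of the
pure exploration game when `γ` lies outside the convex hull of the means. -/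
theorem chm_infeasible_oracle_weights
    {K : ℕ} (hK : 1 ≤ K) (d : ℝ → ℝ → ℝ)
    (hd_nonneg : ∀ x y, 0 ≤ d x y)
    (hd_eq_zero : ∀ x y, d x y = 0 ↔ x = y)
    (hd_cont : ∀ x, Continuous fun y => d x y)
    (hd_mono_right_above : ∀ x l l', x ≤ l → l ≤ l' → d x l ≤ d x l')
    (hd_mono_right_below : ∀ x l l', l' ≤ l → l ≤ x → d x l ≤ d x l')
    (μ : Fin K → ℝ) (γ : ℝ)
    (hinfeas : (∀ a, γ < μ a) ∨ (∀ a, μ a < γ))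
    (wstar : Fin K → ℝ)
    (hwstar : wstar = fun a => (d (μ a) γ)⁻¹ / ∑ i, (d (μ i) γ)⁻¹) :
    sInf {s : ℝ | ∃ lam : Fin K → ℝ,
        ((∃ a, lam a ≤ γ) ∧ (∃ a, γ ≤ lam a)) ∧
        s = ∑ a, wstar a * d (μ a) (lam a)} =
      (∑ a, (d (μ a) γ)⁻¹)⁻¹ ∧
    sInf {s : ℝ | ∃ lam : Fin K → ℝ,
        ((∃ a, lam a ≤ γ) ∧ (∃ a, γ ≤ lam a)) ∧
        s = ∑ a, wstar a * d (μ a) (lam a)} =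
      sSup {v : ℝ | ∃ w : Fin K → ℝ, (∀ a, 0 ≤ w a) ∧ (∑ a, w a) = 1 ∧
        v = sInf {s : ℝ | ∃ lam : Fin K → ℝ,
          ((∃ a, lam a ≤ γ) ∧ (∃ a, γ ≤ lam a)) ∧
          s = ∑ a, w a * d (μ a) (lam a)}} :=
  chm_infeasible_oracle_weights_general hK d hd_nonneg hd_eq_zero hd_mono_right_above
    hd_mono_right_below μ γ hinfeas wstar hwstar
end

section
/- Let d : ℝ × ℝ → ℝ be a divergence function satisfying properties (i)–(iii). Let K ≥ 1, let γ⁻ < γ⁺ be real thresholds, and let μ ∈ ℝ^K satisfy min_a μ_a > γ⁺ (so μ is interval-infeasible). Then sup_{w ∈ Δ_K} inf_{λ ∈ Alt(μ)} Σ_{a=1}^K w_a · d(μ_a, λ_a) = ( Σ_{a=1}^K d(μ_a,γ⁺)^{-1} )^{-1}, and this value is attained at the weights w*_a = d(μ_a,γ⁺)^{-1} / ( Σ_{i=1}^K d(μ_i,γ⁺)^{-1} ); equivalently, the characteristic time T*(μ) equals Σ_{a=1}^K 1/d(μ_a,γ⁺). (Theorem 3, infeasible case, with γ* = γ⁺.)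 -/
/-!
Any alternative must push some arm `b` below `γ⁺`, and since `d(μ_b, ·)` decreases towards
`μ_b > γ⁺` this costs at least `w_b d(μ_b, γ⁺)`; conversely, moving only arm `b` to a point just
below `γ⁺` costs arbitrarily close to that, by continuity. Hence the inner infimum is
`min_b w_b d(μ_b, γ⁺)`, which over the simplex is maximised by equalising the terms
`w_b d(μ_b, γ⁺)`, i.e. by `w_b ∝ d(μ_b, γ⁺)⁻¹`, with value `(Σ_b d(μ_b, γ⁺)⁻¹)⁻¹`.
-/

open Filter Topology

section Weights

variable {ι : Type*} [Fintype ι] {c w : ι → ℝ}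

lemma iInf_mul_le_inv_sum_inv (hc : ∀ a, 0 < c a) (hw : ∑ a, w a = 1) :
    ⨅ a, w a * c a ≤ (∑ a, (c a)⁻¹)⁻¹ := by
  have : Nonempty ι := by
    by_contra h
    simp [not_nonempty_iff.mp h] at hw
  have hS : 0 < ∑ a, (c a)⁻¹ :=
    Finset.sum_pos (fun a _ => inv_pos.mpr (hc a)) Finset.univ_nonempty
  have hterm : ∀ a, (⨅ i, w i * c i) * (c a)⁻¹ ≤ w a := fun a => by
    rw [← div_eq_mul_inv, div_le_iff₀ (hc a)]
    exact ciInf_le (Set.finite_range _).bddBelow a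
  have hsum : (⨅ i, w i * c i) * ∑ a, (c a)⁻¹ ≤ 1 := by
    rw [Finset.mul_sum, ← hw]
    exact Finset.sum_le_sum fun a _ => hterm a
  rw [← one_div, le_div_iff₀ hS]
  exact hsum

lemma sum_inv_div_sum_inv [Nonempty ι] (hc : ∀ a, 0 < c a) :
    ∑ a, (c a)⁻¹ / ∑ i, (c i)⁻¹ = 1 := by
  rw [← Finset.sum_div, div_self]
  exact (Finset.sum_pos (fun a _ => inv_pos.mpr (hc a)) Finset.univ_nonempty).ne'

lemma iInf_inv_div_sum_inv_mul [Nonempty ι] (hc : ∀ a, c a ≠ 0) :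
    ⨅ a, (c a)⁻¹ / (∑ i, (c i)⁻¹) * c a = (∑ i, (c i)⁻¹)⁻¹ := by
  have hconst : ∀ a, (c a)⁻¹ / (∑ i, (c i)⁻¹) * c a = (∑ i, (c i)⁻¹)⁻¹ := fun a => by
    rw [div_mul_eq_mul_div, inv_mul_cancel₀ (hc a), one_div]
  simp only [hconst, ciInf_const]

end Weights

section Divergence

variable {ι : Type*} [Fintype ι] {d : ℝ → ℝ → ℝ} {μ w : ι → ℝ} {γm γp : ℝ}

lemma divergence_pos (hd_nonneg : ∀ x y, 0 ≤ d x y) (hd_eq_zero : ∀ x y, d x y = 0 ↔ x = y)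
    {x y : ℝ} (hxy : x ≠ y) : 0 < d x y :=
  (hd_nonneg x y).lt_of_ne fun h => hxy ((hd_eq_zero x y).mp h.symm)

lemma iInf_mul_le_sum_of_exists_lt (hd_nonneg : ∀ x y, 0 ≤ d x y)
    (hd_mono_right_below : ∀ x l l', l' ≤ l → l ≤ x → d x l ≤ d x l')
    (hμ : ∀ a, γp < μ a) (hw : ∀ a, 0 ≤ w a) {lam : ι → ℝ} (hlam : ∃ a, lam a < γp) :
    ⨅ a, w a * d (μ a) γp ≤ ∑ a, w a * d (μ a) (lam a) := by
  obtain ⟨b, hb⟩ := hlam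
  calc ⨅ a, w a * d (μ a) γp
      ≤ w b * d (μ b) γp := ciInf_le (Set.finite_range _).bddBelow b
    _ ≤ w b * d (μ b) (lam b) :=
        mul_le_mul_of_nonneg_left (hd_mono_right_below _ _ _ hb.le (hμ b).le) (hw b)
    _ ≤ ∑ a, w a * d (μ a) (lam a) :=
        Finset.single_le_sum (fun a _ => mul_nonneg (hw a) (hd_nonneg _ _)) (Finset.mem_univ b)

lemma sum_mul_update_eq [DecidableEq ι] (hd_self : ∀ x, d x x = 0) (b : ι) (t : ℝ) :
    ∑ a, w a * d (μ a) (Function.update μ b t a) = w b * d (μ b) t := by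
  rw [Finset.sum_eq_single b (fun a _ hab => by simp [Function.update_of_ne hab, hd_self])
    (fun hb => absurd (Finset.mem_univ b) hb)]
  simp

theorem sInf_alt_eq_iInf_mul [Nonempty ι] (hd_nonneg : ∀ x y, 0 ≤ d x y)
    (hd_eq_zero : ∀ x y, d x y = 0 ↔ x = y) (hd_cont : ∀ x, Continuous fun y => d x y)
    (hd_mono_right_below : ∀ x l l', l' ≤ l → l ≤ x → d x l ≤ d x l')
    (hγ : γm < γp) (hμ : ∀ a, γp < μ a) (hw : ∀ a, 0 ≤ w a) :
    sInf {s : ℝ | ∃ lam : ι → ℝ, ((∃ a, lam a < γp) ∧ (∃ a, γm < lam a)) ∧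
        s = ∑ a, w a * d (μ a) (lam a)} = ⨅ a, w a * d (μ a) γp := by
  classical
  set A := {s : ℝ | ∃ lam : ι → ℝ, ((∃ a, lam a < γp) ∧ (∃ a, γm < lam a)) ∧
    s = ∑ a, w a * d (μ a) (lam a)}
  have hA_bdd : BddBelow A := ⟨0, by
    rintro s ⟨lam, -, rfl⟩
    exact Finset.sum_nonneg fun a _ => mul_nonneg (hw a) (hd_nonneg _ _)⟩
  have hmove : ∀ b t, γm < t → t < γp → w b * d (μ b) t ∈ A := fun b t hmt htp =>
    ⟨Function.update μ b t, ⟨⟨b, by simpa⟩, ⟨b, by simpa⟩⟩,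
      (sum_mul_update_eq (fun x => (hd_eq_zero x x).mpr rfl) b t).symm⟩
  apply le_antisymm
  · refine le_ciInf fun b => ?_
    have hlim : Tendsto (fun t => w b * d (μ b) t) (𝓝[<] γp) (𝓝 (w b * d (μ b) γp)) :=
      ((hd_cont (μ b)).const_mul (w b)).continuousAt.tendsto.mono_left nhdsWithin_le_nhds
    have hnear : ∀ᶠ t in 𝓝[<] γp, sInf A ≤ w b * d (μ b) t := by
      filter_upwards [Ioo_mem_nhdsLT hγ] with t ht
      exact csInf_le hA_bdd (hmove b t ht.1 ht.2)
    exact ge_of_tendsto hlim hnear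
  · obtain ⟨b⟩ := ‹Nonempty ι›
    refine le_csInf ⟨_, hmove b ((γm + γp) / 2) (by linarith) (by linarith)⟩ ?_
    rintro s ⟨lam, ⟨hlam, -⟩, rfl⟩
    exact iInf_mul_le_sum_of_exists_lt hd_nonneg hd_mono_right_below hμ hw hlam

end Divergence

theorem interval_chm_infeasible_characteristic_time_general
    {K : ℕ} (hK : 1 ≤ K) (d : ℝ → ℝ → ℝ)
    (hd_nonneg : ∀ x y, 0 ≤ d x y)
    (hd_eq_zero : ∀ x y, d x y = 0 ↔ x = y)
    (hd_cont : ∀ x, Continuous fun y => d x y)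
    (hd_mono_right_below : ∀ x l l', l' ≤ l → l ≤ x → d x l ≤ d x l')
    (μ : Fin K → ℝ) (γm γp : ℝ) (hγ : γm < γp)
    (hinfeas : ∀ a, γp < μ a)
    (wstar : Fin K → ℝ)
    (hwstar : wstar = fun a => (d (μ a) γp)⁻¹ / ∑ i, (d (μ i) γp)⁻¹) :
    sSup {v : ℝ | ∃ w : Fin K → ℝ, (∀ a, 0 ≤ w a) ∧ (∑ a, w a) = 1 ∧
        v = sInf {s : ℝ | ∃ lam : Fin K → ℝ,
          ((∃ a, lam a < γp) ∧ (∃ a, γm < lam a)) ∧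
          s = ∑ a, w a * d (μ a) (lam a)}} =
      (∑ a, (d (μ a) γp)⁻¹)⁻¹ ∧
    sInf {s : ℝ | ∃ lam : Fin K → ℝ,
        ((∃ a, lam a < γp) ∧ (∃ a, γm < lam a)) ∧
        s = ∑ a, wstar a * d (μ a) (lam a)} =
      (∑ a, (d (μ a) γp)⁻¹)⁻¹ := by
  have : Nonempty (Fin K) := Fin.pos_iff_nonempty.mp hK
  have hc : ∀ a, 0 < d (μ a) γp := fun a =>
    divergence_pos hd_nonneg hd_eq_zero (hinfeas a).ne'
  have hinner : ∀ w : Fin K → ℝ, (∀ a, 0 ≤ w a) → _ := fun w hw =>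
    sInf_alt_eq_iInf_mul (w := w) hd_nonneg hd_eq_zero hd_cont hd_mono_right_below hγ hinfeas hw
  have hwstar_nonneg : ∀ a, 0 ≤ wstar a := fun a => by
    rw [hwstar]
    exact div_nonneg (inv_pos.mpr (hc a)).le (Finset.sum_nonneg fun i _ => (inv_pos.mpr (hc i)).le)
  have hwstar_sum : ∑ a, wstar a = 1 := by
    rw [hwstar]
    exact sum_inv_div_sum_inv hc
  have hwstar_value : sInf {s : ℝ | ∃ lam : Fin K → ℝ,
      ((∃ a, lam a < γp) ∧ (∃ a, γm < lam a)) ∧ s = ∑ a, wstar a * d (μ a) (lam a)} =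
      (∑ a, (d (μ a) γp)⁻¹)⁻¹ := by
    rw [hinner wstar hwstar_nonneg, hwstar]
    exact iInf_inv_div_sum_inv_mul fun a => (hc a).ne'
  refine ⟨IsGreatest.csSup_eq ⟨⟨wstar, hwstar_nonneg, hwstar_sum, hwstar_value.symm⟩, ?_⟩,
    hwstar_value⟩
  rintro v ⟨w, hw, hw_sum, rfl⟩
  rw [hinner w hw]
  exact iInf_mul_le_inv_sum_inv hc hw_sum

/-- Theorem 3 (infeasible case, with `γ* = γ⁺`): when all means lie above `γ⁺`, the
sup-inf value of the interval CHM exploration game is `(Σ_a d(μ_a,γ⁺)⁻¹)⁻¹`, attained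
at the weights proportional to `d(μ_a,γ⁺)⁻¹`. -/
theorem interval_chm_infeasible_characteristic_time
    {K : ℕ} (hK : 1 ≤ K) (d : ℝ → ℝ → ℝ)
    (hd_nonneg : ∀ x y, 0 ≤ d x y)
    (hd_eq_zero : ∀ x y, d x y = 0 ↔ x = y)
    (hd_cont : ∀ x, Continuous fun y => d x y)
    (hd_mono_right_above : ∀ x l l', x ≤ l → l ≤ l' → d x l ≤ d x l')
    (hd_mono_right_below : ∀ x l l', l' ≤ l → l ≤ x → d x l ≤ d x l')
    (μ : Fin K → ℝ) (γm γp : ℝ) (hγ : γm < γp)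
    (hinfeas : ∀ a, γp < μ a)
    (wstar : Fin K → ℝ)
    (hwstar : wstar = fun a => (d (μ a) γp)⁻¹ / ∑ i, (d (μ i) γp)⁻¹) :
    sSup {v : ℝ | ∃ w : Fin K → ℝ, (∀ a, 0 ≤ w a) ∧ (∑ a, w a) = 1 ∧
        v = sInf {s : ℝ | ∃ lam : Fin K → ℝ,
          ((∃ a, lam a < γp) ∧ (∃ a, γm < lam a)) ∧
          s = ∑ a, w a * d (μ a) (lam a)}} =
      (∑ a, (d (μ a) γp)⁻¹)⁻¹ ∧
    sInf {s : ℝ | ∃ lam : Fin K → ℝ,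
        ((∃ a, lam a < γp) ∧ (∃ a, γm < lam a)) ∧
        s = ∑ a, wstar a * d (μ a) (lam a)} =
      (∑ a, (d (μ a) γp)⁻¹)⁻¹ :=
  interval_chm_infeasible_characteristic_time_general hK d hd_nonneg hd_eq_zero hd_cont
    hd_mono_right_below μ γm γp hγ hinfeas wstar hwstar
end

section
/- Let d : ℝ × ℝ → ℝ be a divergence function satisfying properties (i)–(iii). Let K ≥ 2, let μ ∈ ℝ^K and γ ∈ ℝ be such that some μ_a < γ and some μ_a > γ (and μ_a ≠ γ for all a), and let w ∈ Δ_K. Then the infimum of Σ_{a=1}^K w_a · d(μ_a, λ_a) over all λ ∈ ℝ^K such that either max_a λ_a < γ or min_a λ_a > γ equals min( Σ_{a : μ_a < γ} w_a · d(μ_a, γ), Σ_{a : μ_a > γ} w_a · d(μ_a, γ) ). (Inner infimum computation in the proof of Theorem 1, feasible case.) -/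
/-!
Splitting the feasible set according to which side of `γ` the alternative lies on, each half
has infimum `∑ a, w a * d (μ a) (min (μ a) γ)` (resp. with `max`), which are the two one-sided
sums since `d x x = 0`. For the lower bound, monotonicity of `d x ·` away from `x` shows that
clamping `lam a` to `min (μ a) γ` only decreases each term; the bound is approached by the
alternatives `min (μ a) (γ - t)` as `t → 0⁺`, by continuity of `d x ·`.
-/

open Filter Topology Finset

section WeightedDivergence

variable {ι : Type*} [Fintype ι] {d : ℝ → ℝ → ℝ}

lemma divergence_min_le (hd_nonneg : ∀ x y, 0 ≤ d x y) (hd_self : ∀ x, d x x = 0)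
    (hd_mono_right_below : ∀ x l l', l' ≤ l → l ≤ x → d x l ≤ d x l')
    {x γ l : ℝ} (hl : l ≤ γ) : d x (min x γ) ≤ d x l := by
  rcases le_total x γ with h | h
  · rw [min_eq_left h, hd_self]
    exact hd_nonneg x l
  · rw [min_eq_right h]
    exact hd_mono_right_below x γ l hl h

lemma divergence_max_le (hd_nonneg : ∀ x y, 0 ≤ d x y) (hd_self : ∀ x, d x x = 0)
    (hd_mono_right_above : ∀ x l l', x ≤ l → l ≤ l' → d x l ≤ d x l')
    {x γ l : ℝ} (hl : γ ≤ l) : d x (max x γ) ≤ d x l := by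
  rcases le_total γ x with h | h
  · rw [max_eq_left h, hd_self]
    exact hd_nonneg x l
  · rw [max_eq_right h]
    exact hd_mono_right_above x γ l h hl

lemma sum_filter_gt_eq_sum_min (hd_self : ∀ x, d x x = 0) (w μ : ι → ℝ) (γ : ℝ) :
    ∑ a ∈ univ.filter (fun a => γ < μ a), w a * d (μ a) γ =
      ∑ a, w a * d (μ a) (min (μ a) γ) := by
  rw [sum_filter]
  refine sum_congr rfl fun a _ => ?_
  split_ifs with h
  · rw [min_eq_right h.le]
  · rw [min_eq_left (not_lt.mp h), hd_self, mul_zero]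

lemma sum_filter_lt_eq_sum_max (hd_self : ∀ x, d x x = 0) (w μ : ι → ℝ) (γ : ℝ) :
    ∑ a ∈ univ.filter (fun a => μ a < γ), w a * d (μ a) γ =
      ∑ a, w a * d (μ a) (max (μ a) γ) := by
  rw [sum_filter]
  refine sum_congr rfl fun a _ => ?_
  split_ifs with h
  · rw [max_eq_right h.le]
  · rw [max_eq_left (not_lt.mp h), hd_self, mul_zero]

variable (hd_nonneg : ∀ x y, 0 ≤ d x y) (hd_self : ∀ x, d x x = 0)
  (hd_cont : ∀ x, Continuous fun y => d x y) {w : ι → ℝ} (hw_nonneg : ∀ a, 0 ≤ w a)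
  (μ : ι → ℝ) (γ : ℝ)
include hd_nonneg hd_self hd_cont hw_nonneg

lemma isGLB_weighted_divergence_of_lt
    (hd_mono_right_below : ∀ x l l', l' ≤ l → l ≤ x → d x l ≤ d x l') :
    IsGLB {s | ∃ lam : ι → ℝ, (∀ a, lam a < γ) ∧ s = ∑ a, w a * d (μ a) (lam a)}
      (∑ a, w a * d (μ a) (min (μ a) γ)) := by
  refine isGLB_of_mem_closure ?_ ?_
  · rintro s ⟨lam, hlam, rfl⟩
    exact sum_le_sum fun a _ => mul_le_mul_of_nonneg_left
      (divergence_min_le hd_nonneg hd_self hd_mono_right_below (hlam a).le) (hw_nonneg a)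
  · have hcont : Continuous fun t => ∑ a, w a * d (μ a) (min (μ a) (γ - t)) :=
      continuous_finsetSum _ fun a _ => continuous_const.mul
        ((hd_cont _).comp (continuous_const.min (continuous_const.sub continuous_id)))
    have hlim : Tendsto (fun t => ∑ a, w a * d (μ a) (min (μ a) (γ - t))) (𝓝[>] 0)
        (𝓝 (∑ a, w a * d (μ a) (min (μ a) γ))) := by
      simpa using hcont.continuousWithinAt.tendsto (s := Set.Ioi 0) (x := 0)
    refine mem_closure_of_tendsto hlim ?_
    filter_upwards [self_mem_nhdsWithin] with t (ht : 0 < t)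
    exact ⟨fun a => min (μ a) (γ - t), fun a => (min_le_right _ _).trans_lt (sub_lt_self γ ht),
      rfl⟩

lemma isGLB_weighted_divergence_of_gt
    (hd_mono_right_above : ∀ x l l', x ≤ l → l ≤ l' → d x l ≤ d x l') :
    IsGLB {s | ∃ lam : ι → ℝ, (∀ a, γ < lam a) ∧ s = ∑ a, w a * d (μ a) (lam a)}
      (∑ a, w a * d (μ a) (max (μ a) γ)) := by
  refine isGLB_of_mem_closure ?_ ?_
  · rintro s ⟨lam, hlam, rfl⟩
    exact sum_le_sum fun a _ => mul_le_mul_of_nonneg_left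
      (divergence_max_le hd_nonneg hd_self hd_mono_right_above (hlam a).le) (hw_nonneg a)
  · have hcont : Continuous fun t => ∑ a, w a * d (μ a) (max (μ a) (γ + t)) :=
      continuous_finsetSum _ fun a _ => continuous_const.mul
        ((hd_cont _).comp (continuous_const.max (continuous_const.add continuous_id)))
    have hlim : Tendsto (fun t => ∑ a, w a * d (μ a) (max (μ a) (γ + t))) (𝓝[>] 0)
        (𝓝 (∑ a, w a * d (μ a) (max (μ a) γ))) := by
      simpa using hcont.continuousWithinAt.tendsto (s := Set.Ioi 0) (x := 0)
    refine mem_closure_of_tendsto hlim ?_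
    filter_upwards [self_mem_nhdsWithin] with t (ht : 0 < t)
    exact ⟨fun a => max (μ a) (γ + t), fun a => (lt_add_of_pos_right γ ht).trans_le
      (le_max_right _ _), rfl⟩

end WeightedDivergence

theorem chm_feasible_inner_infimum_general
    {K : ℕ} (d : ℝ → ℝ → ℝ)
    (hd_nonneg : ∀ x y, 0 ≤ d x y)
    (hd_eq_zero : ∀ x y, d x y = 0 ↔ x = y)
    (hd_cont : ∀ x, Continuous fun y => d x y)
    (hd_mono_right_above : ∀ x l l', x ≤ l → l ≤ l' → d x l ≤ d x l')
    (hd_mono_right_below : ∀ x l l', l' ≤ l → l ≤ x → d x l ≤ d x l')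
    (μ : Fin K → ℝ) (γ : ℝ)
    (w : Fin K → ℝ) (hw_nonneg : ∀ a, 0 ≤ w a) :
    sInf {s : ℝ | ∃ lam : Fin K → ℝ,
        ((∀ a, lam a < γ) ∨ (∀ a, γ < lam a)) ∧
        s = ∑ a, w a * d (μ a) (lam a)} =
      min (∑ a ∈ Finset.univ.filter (fun a => μ a < γ), w a * d (μ a) γ)
          (∑ a ∈ Finset.univ.filter (fun a => γ < μ a), w a * d (μ a) γ) := by
  have hd_self : ∀ x, d x x = 0 := fun x => (hd_eq_zero x x).2 rfl
  have hsplit : {s : ℝ | ∃ lam : Fin K → ℝ,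
      ((∀ a, lam a < γ) ∨ (∀ a, γ < lam a)) ∧ s = ∑ a, w a * d (μ a) (lam a)} =
      {s | ∃ lam : Fin K → ℝ, (∀ a, lam a < γ) ∧ s = ∑ a, w a * d (μ a) (lam a)} ∪
        {s | ∃ lam : Fin K → ℝ, (∀ a, γ < lam a) ∧
          s = ∑ a, w a * d (μ a) (lam a)} := by
    ext s
    simp only [Set.mem_ofPred_eq, Set.mem_union, or_and_right, exists_or]
  have hglb := (isGLB_weighted_divergence_of_lt hd_nonneg hd_self hd_cont hw_nonneg μ γ
    hd_mono_right_below).union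
    (isGLB_weighted_divergence_of_gt hd_nonneg hd_self hd_cont hw_nonneg μ γ hd_mono_right_above)
  rw [hsplit, hglb.csInf_eq ⟨_, Or.inl ⟨fun _ => γ - 1, fun _ => by linarith, rfl⟩⟩,
    sum_filter_lt_eq_sum_max hd_self, sum_filter_gt_eq_sum_min hd_self, min_comm]

/-- Inner infimum computation in the proof of Theorem 1 (feasible case): for a fixed
weight vector `w` in the simplex, the infimum of `Σ_a w_a d(μ_a, λ_a)` over alternatives
`λ` with `max λ < γ` or `min λ > γ` equals the minimum of the two one-sided sums. -/
theorem chm_feasible_inner_infimum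
    {K : ℕ} (hK : 2 ≤ K) (d : ℝ → ℝ → ℝ)
    (hd_nonneg : ∀ x y, 0 ≤ d x y)
    (hd_eq_zero : ∀ x y, d x y = 0 ↔ x = y)
    (hd_cont : ∀ x, Continuous fun y => d x y)
    (hd_mono_right_above : ∀ x l l', x ≤ l → l ≤ l' → d x l ≤ d x l')
    (hd_mono_right_below : ∀ x l l', l' ≤ l → l ≤ x → d x l ≤ d x l')
    (μ : Fin K → ℝ) (γ : ℝ)
    (hbelow : ∃ a, μ a < γ) (habove : ∃ a, γ < μ a) (hne : ∀ a, μ a ≠ γ)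
    (w : Fin K → ℝ) (hw_nonneg : ∀ a, 0 ≤ w a) (hw_sum : ∑ a, w a = 1) :
    sInf {s : ℝ | ∃ lam : Fin K → ℝ,
        ((∀ a, lam a < γ) ∨ (∀ a, γ < lam a)) ∧
        s = ∑ a, w a * d (μ a) (lam a)} =
      min (∑ a ∈ Finset.univ.filter (fun a => μ a < γ), w a * d (μ a) γ)
          (∑ a ∈ Finset.univ.filter (fun a => γ < μ a), w a * d (μ a) γ) :=
  chm_feasible_inner_infimum_general d hd_nonneg hd_eq_zero hd_cont hd_mono_right_above
    hd_mono_right_below μ γ w hw_nonneg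
end

section
/- Let d : ℝ × ℝ → ℝ be a divergence function satisfying properties (i)–(iii). Let K ≥ 1, let μ ∈ ℝ^K and γ ∈ ℝ be such that γ < min_a μ_a or γ > max_a μ_a, and let w ∈ Δ_K. Then the infimum of Σ_{a=1}^K w_a · d(μ_a, λ_a) over all λ ∈ ℝ^K such that min_a λ_a ≤ γ ≤ max_a λ_a equals min_{1 ≤ a ≤ K} w_a · d(μ_a, γ), and this infimum is attained. (Inner infimum computation in the proof of Theorem 1, infeasible case.) -/
/-!
If every `μ a` lies strictly on one side of `γ`, then any alternative `λ` with
`min λ ≤ γ ≤ max λ` has some coordinate `c` that has crossed `γ`; by monotonicity of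
`d (μ c) ·` on that side, its term already costs at least `w c * d (μ c) γ`. Conversely,
moving only coordinate `a` to `γ` and leaving the others at `μ` costs exactly
`w a * d (μ a) γ`. So the smallest of these finitely many values is the least element.
-/

open Finset

theorem isLeast_sInf_range_of_range_subset {ι α : Type*} [ConditionallyCompleteLinearOrder α]
    [Finite ι] [Nonempty ι] {f : ι → α} {S : Set α} (hsub : Set.range f ⊆ S)
    (hle : ∀ s ∈ S, ∃ i, f i ≤ s) : IsLeast S (sInf (Set.range f)) := by
  have hfin := Set.finite_range f
  refine ⟨hsub ((Set.range_nonempty f).csInf_mem hfin), fun s hs => ?_⟩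
  obtain ⟨i, hi⟩ := hle s hs
  exact (csInf_le hfin.bddBelow ⟨i, rfl⟩).trans hi

theorem sum_apply_update_eq {ι : Type*} [Fintype ι] [DecidableEq ι] (g : ι → ℝ → ℝ)
    (μ : ι → ℝ) (hg : ∀ b, g b (μ b) = 0) (a : ι) (γ : ℝ) :
    ∑ b, g b (Function.update μ a γ b) = g a γ := by
  simp only [Function.update_apply, apply_ite (g _), hg, sum_ite_eq', mem_univ, if_true]

theorem exists_le_of_straddle {ι : Type*} (d : ℝ → ℝ → ℝ)
    (hd_mono_right_above : ∀ x l l', x ≤ l → l ≤ l' → d x l ≤ d x l')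
    (hd_mono_right_below : ∀ x l l', l' ≤ l → l ≤ x → d x l ≤ d x l')
    {μ lam : ι → ℝ} {γ : ℝ} (hinfeas : (∀ a, γ < μ a) ∨ (∀ a, μ a < γ))
    (hlo : ∃ a, lam a ≤ γ) (hhi : ∃ a, γ ≤ lam a) :
    ∃ c, d (μ c) γ ≤ d (μ c) (lam c) := by
  obtain ⟨a, ha⟩ := hlo
  obtain ⟨b, hb⟩ := hhi
  rcases hinfeas with h | h
  · exact ⟨a, hd_mono_right_below _ _ _ ha (h a).le⟩
  · exact ⟨b, hd_mono_right_above _ _ _ (h b).le hb⟩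

theorem chm_infeasible_inner_infimum_general
    {K : ℕ} (hK : 1 ≤ K) (d : ℝ → ℝ → ℝ)
    (hd_nonneg : ∀ x y, 0 ≤ d x y)
    (hd_eq_zero : ∀ x y, d x y = 0 ↔ x = y)
    (hd_mono_right_above : ∀ x l l', x ≤ l → l ≤ l' → d x l ≤ d x l')
    (hd_mono_right_below : ∀ x l l', l' ≤ l → l ≤ x → d x l ≤ d x l')
    (μ : Fin K → ℝ) (γ : ℝ)
    (hinfeas : (∀ a, γ < μ a) ∨ (∀ a, μ a < γ))
    (w : Fin K → ℝ) (hw_nonneg : ∀ a, 0 ≤ w a)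
    (S : Set ℝ)
    (hS : S = {s : ℝ | ∃ lam : Fin K → ℝ,
        ((∃ a, lam a ≤ γ) ∧ (∃ a, γ ≤ lam a)) ∧
        s = ∑ a, w a * d (μ a) (lam a)}) :
    sInf S = sInf (Set.range fun a => w a * d (μ a) γ) ∧ sInf S ∈ S := by
  have : Nonempty (Fin K) := Fin.pos_iff_nonempty.mp hK
  have hleast : IsLeast S (sInf (Set.range fun a => w a * d (μ a) γ)) := by
    subst hS
    refine isLeast_sInf_range_of_range_subset ?_ ?_
    · rintro _ ⟨a, rfl⟩
      refine ⟨Function.update μ a γ, ⟨⟨a, by simp⟩, ⟨a, by simp⟩⟩, ?_⟩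
      exact (sum_apply_update_eq (fun b l => w b * d (μ b) l) μ
        (fun b => by simp [(hd_eq_zero _ _).mpr rfl]) a γ).symm
    · rintro _ ⟨lam, ⟨hlo, hhi⟩, rfl⟩
      obtain ⟨c, hc⟩ := exists_le_of_straddle d hd_mono_right_above hd_mono_right_below
        hinfeas hlo hhi
      exact ⟨c, (mul_le_mul_of_nonneg_left hc (hw_nonneg c)).trans <|
        single_le_sum (f := fun i => w i * d (μ i) (lam i))
          (fun i _ => mul_nonneg (hw_nonneg i) (hd_nonneg _ _)) (mem_univ c)⟩
  exact ⟨hleast.csInf_eq, hleast.csInf_eq ▸ hleast.1⟩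

/-- Inner infimum computation in the proof of Theorem 1 (infeasible case): for a fixed
weight vector `w` in the simplex, the infimum of `Σ_a w_a d(μ_a, λ_a)` over alternatives
`λ` with `min λ ≤ γ ≤ max λ` equals `min_a w_a d(μ_a, γ)`, and it is attained. -/
theorem chm_infeasible_inner_infimum
    {K : ℕ} (hK : 1 ≤ K) (d : ℝ → ℝ → ℝ)
    (hd_nonneg : ∀ x y, 0 ≤ d x y)
    (hd_eq_zero : ∀ x y, d x y = 0 ↔ x = y)
    (hd_cont : ∀ x, Continuous fun y => d x y)
    (hd_mono_right_above : ∀ x l l', x ≤ l → l ≤ l' → d x l ≤ d x l')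
    (hd_mono_right_below : ∀ x l l', l' ≤ l → l ≤ x → d x l ≤ d x l')
    (μ : Fin K → ℝ) (γ : ℝ)
    (hinfeas : (∀ a, γ < μ a) ∨ (∀ a, μ a < γ))
    (w : Fin K → ℝ) (hw_nonneg : ∀ a, 0 ≤ w a) (hw_sum : ∑ a, w a = 1)
    (S : Set ℝ)
    (hS : S = {s : ℝ | ∃ lam : Fin K → ℝ,
        ((∃ a, lam a ≤ γ) ∧ (∃ a, γ ≤ lam a)) ∧
        s = ∑ a, w a * d (μ a) (lam a)}) :
    sInf S = sInf (Set.range fun a => w a * d (μ a) γ) ∧ sInf S ∈ S :=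
  chm_infeasible_inner_infimum_general hK d hd_nonneg hd_eq_zero hd_mono_right_above
    hd_mono_right_below μ γ hinfeas w hw_nonneg S hS
end

section
/- Let d : ℝ × ℝ → ℝ be a divergence function satisfying properties (i)–(iii). Let K ≥ 2, let γ⁻ < γ⁺ be real thresholds, let μ ∈ ℝ^K satisfy min_a μ_a < γ⁺, max_a μ_a > γ⁻, and μ_a ∉ {γ⁻,γ⁺} for all a, and let w ∈ Δ_K. Then the infimum of Σ_{a=1}^K w_a · d(μ_a, λ_a) over all λ ∈ ℝ^K such that either max_a λ_a ≤ γ⁻ or min_a λ_a ≥ γ⁺ equals min( Σ_{a : μ_a > γ⁻} w_a · d(μ_a, γ⁻), Σ_{a : μ_a < γ⁺} w_a · d(μ_a, γ⁺) ). (Inner infimum computation in the proof of Theorem 3, feasible case.) -/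
/-!
The set of alternatives splits into those lying entirely at or below `γm` and those lying
entirely at or above `γp`, so the infimum is the minimum of the two one-sided infima. On the
lower side, monotonicity of `d` in its second argument gives `d (μ a) (lam a) ≥ d (μ a) γm`
whenever `μ a > γm ≥ lam a`, and the other terms are nonnegative; the clipped alternative
`lam a = min (μ a) γm` attains this bound since `d x x = 0`. The upper side is symmetric.
-/

open Finset

section OneSided

variable {ι : Type*} [Fintype ι] {d : ℝ → ℝ → ℝ} {μ w : ι → ℝ} {γ : ℝ}

theorem isLeast_weighted_sum_of_forall_le (hd_nonneg : ∀ x y, 0 ≤ d x y)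
    (hd_self : ∀ x, d x x = 0) (hd_mono : ∀ x l l', l' ≤ l → l ≤ x → d x l ≤ d x l')
    (hw : ∀ a, 0 ≤ w a) :
    IsLeast {s : ℝ | ∃ lam : ι → ℝ, (∀ a, lam a ≤ γ) ∧ s = ∑ a, w a * d (μ a) (lam a)}
      (∑ a ∈ univ.filter (fun a => γ < μ a), w a * d (μ a) γ) := by
  refine ⟨⟨fun a => min (μ a) γ, fun a => min_le_right _ _, ?_⟩, ?_⟩
  · rw [sum_filter]
    refine sum_congr rfl fun a _ => ?_
    dsimp only
    split_ifs with h
    · rw [min_eq_right h.le]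
    · rw [min_eq_left (not_lt.mp h), hd_self, mul_zero]
  · rintro s ⟨lam, hlam, rfl⟩
    rw [sum_filter]
    refine sum_le_sum fun a _ => ?_
    split_ifs with h
    · exact mul_le_mul_of_nonneg_left (hd_mono _ _ _ (hlam a) h.le) (hw a)
    · exact mul_nonneg (hw a) (hd_nonneg _ _)

theorem isLeast_weighted_sum_of_forall_ge (hd_nonneg : ∀ x y, 0 ≤ d x y)
    (hd_self : ∀ x, d x x = 0) (hd_mono : ∀ x l l', x ≤ l → l ≤ l' → d x l ≤ d x l')
    (hw : ∀ a, 0 ≤ w a) :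
    IsLeast {s : ℝ | ∃ lam : ι → ℝ, (∀ a, γ ≤ lam a) ∧ s = ∑ a, w a * d (μ a) (lam a)}
      (∑ a ∈ univ.filter (fun a => μ a < γ), w a * d (μ a) γ) := by
  refine ⟨⟨fun a => max (μ a) γ, fun a => le_max_right _ _, ?_⟩, ?_⟩
  · rw [sum_filter]
    refine sum_congr rfl fun a _ => ?_
    dsimp only
    split_ifs with h
    · rw [max_eq_right h.le]
    · rw [max_eq_left (not_lt.mp h), hd_self, mul_zero]
  · rintro s ⟨lam, hlam, rfl⟩
    rw [sum_filter]
    refine sum_le_sum fun a _ => ?_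
    split_ifs with h
    · exact mul_le_mul_of_nonneg_left (hd_mono _ _ _ h.le (hlam a)) (hw a)
    · exact mul_nonneg (hw a) (hd_nonneg _ _)

end OneSided

theorem interval_chm_feasible_inner_infimum_general
    {K : ℕ} (d : ℝ → ℝ → ℝ)
    (hd_nonneg : ∀ x y, 0 ≤ d x y)
    (hd_eq_zero : ∀ x y, d x y = 0 ↔ x = y)
    (hd_mono_right_above : ∀ x l l', x ≤ l → l ≤ l' → d x l ≤ d x l')
    (hd_mono_right_below : ∀ x l l', l' ≤ l → l ≤ x → d x l ≤ d x l')
    (μ : Fin K → ℝ) (γm γp : ℝ)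
    (w : Fin K → ℝ) (hw_nonneg : ∀ a, 0 ≤ w a) :
    sInf {s : ℝ | ∃ lam : Fin K → ℝ,
        ((∀ a, lam a ≤ γm) ∨ (∀ a, γp ≤ lam a)) ∧
        s = ∑ a, w a * d (μ a) (lam a)} =
      min (∑ a ∈ Finset.univ.filter (fun a => γm < μ a), w a * d (μ a) γm)
          (∑ a ∈ Finset.univ.filter (fun a => μ a < γp), w a * d (μ a) γp) := by
  have hd_self : ∀ x, d x x = 0 := fun x => (hd_eq_zero x x).2 rfl
  have hsplit : {s : ℝ | ∃ lam : Fin K → ℝ,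
      ((∀ a, lam a ≤ γm) ∨ (∀ a, γp ≤ lam a)) ∧ s = ∑ a, w a * d (μ a) (lam a)} =
      {s | ∃ lam : Fin K → ℝ, (∀ a, lam a ≤ γm) ∧ s = ∑ a, w a * d (μ a) (lam a)} ∪
      {s | ∃ lam : Fin K → ℝ, (∀ a, γp ≤ lam a) ∧ s = ∑ a, w a * d (μ a) (lam a)} := by
    ext s
    simp only [Set.mem_ofPred_eq, Set.mem_union, or_and_right, exists_or]
  rw [hsplit]
  exact ((isLeast_weighted_sum_of_forall_le hd_nonneg hd_self hd_mono_right_below hw_nonneg).union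
    (isLeast_weighted_sum_of_forall_ge hd_nonneg hd_self hd_mono_right_above hw_nonneg)).csInf_eq

/-- Inner infimum computation in the proof of Theorem 3 (feasible case): for a fixed
weight vector `w` in the simplex, the infimum of `Σ_a w_a d(μ_a, λ_a)` over alternatives
`λ` with `max λ ≤ γ⁻` or `min λ ≥ γ⁺` equals the minimum of the two one-sided sums. -/
theorem interval_chm_feasible_inner_infimum
    {K : ℕ} (hK : 2 ≤ K) (d : ℝ → ℝ → ℝ)
    (hd_nonneg : ∀ x y, 0 ≤ d x y)
    (hd_eq_zero : ∀ x y, d x y = 0 ↔ x = y)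
    (hd_cont : ∀ x, Continuous fun y => d x y)
    (hd_mono_right_above : ∀ x l l', x ≤ l → l ≤ l' → d x l ≤ d x l')
    (hd_mono_right_below : ∀ x l l', l' ≤ l → l ≤ x → d x l ≤ d x l')
    (μ : Fin K → ℝ) (γm γp : ℝ) (hγ : γm < γp)
    (hfeas₁ : ∃ a, μ a < γp) (hfeas₂ : ∃ a, γm < μ a)
    (hne : ∀ a, μ a ≠ γm ∧ μ a ≠ γp)
    (w : Fin K → ℝ) (hw_nonneg : ∀ a, 0 ≤ w a) (hw_sum : ∑ a, w a = 1) :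
    sInf {s : ℝ | ∃ lam : Fin K → ℝ,
        ((∀ a, lam a ≤ γm) ∨ (∀ a, γp ≤ lam a)) ∧
        s = ∑ a, w a * d (μ a) (lam a)} =
      min (∑ a ∈ Finset.univ.filter (fun a => γm < μ a), w a * d (μ a) γm)
          (∑ a ∈ Finset.univ.filter (fun a => μ a < γp), w a * d (μ a) γp) :=
  interval_chm_feasible_inner_infimum_general d hd_nonneg hd_eq_zero hd_mono_right_above
    hd_mono_right_below μ γm γp w hw_nonneg
end

section
/- Let K ≥ 2, let d_1, …, d_K be positive real numbers, and let S⁻ and S⁺ be nonempty disjoint subsets of {1,…,K} with S⁻ ∪ S⁺ = {1,…,K}. Set D⁻ = max_{a ∈ S⁻} d_a and D⁺ = max_{a ∈ S⁺} d_a. Then sup_{w ∈ Δ_K} min( Σ_{a ∈ S⁻} w_a d_a, Σ_{a ∈ S⁺} w_a d_a ) = ( (D⁻)^{-1} + (D⁺)^{-1} )^{-1}, and the supremum is attained at the weight vector that places mass (D⁻)^{-1}/((D⁻)^{-1}+(D⁺)^{-1}) on an index a⁻ ∈ S⁻ with d_{a⁻} = D⁻, mass (D⁺)^{-1}/((D⁻)^{-1}+(D⁺)^{-1})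 on an index a⁺ ∈ S⁺ with d_{a⁺} = D⁺, and mass 0 elsewhere. (Simplex allocation game solved in the proof of Theorem 1, feasible case.) -/
/-! Each group contributes at most its maximal value times the mass it receives, so a common
lower bound `v` of both group payoffs needs mass at least `v / D⁻` on `S⁻` and `v / D⁺` on `S⁺`;
the total mass `1` then forces `v ≤ ((D⁻)⁻¹ + (D⁺)⁻¹)⁻¹`. Splitting the mass in proportion
`(D⁻)⁻¹ : (D⁺)⁻¹` between two maximizers makes both payoffs equal to this bound. -/

open Finset

lemma min_le_inv_add_inv {𝕜 : Type*} [Field 𝕜] [LinearOrder 𝕜] [IsStrictOrderedRing 𝕜]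
    {x y s t D D' : 𝕜} (hD : 0 < D) (hD' : 0 < D')
    (hx : x ≤ D * s) (hy : y ≤ D' * t) (hst : s + t ≤ 1) :
    min x y ≤ (D⁻¹ + D'⁻¹)⁻¹ := by
  have hs : min x y * D⁻¹ ≤ s := (mul_inv_le_iff₀' hD).2 ((min_le_left x y).trans hx)
  have ht : min x y * D'⁻¹ ≤ t := (mul_inv_le_iff₀' hD').2 ((min_le_right x y).trans hy)
  rw [← one_div, le_div_iff₀ (by positivity), mul_add]
  linarith

lemma Finset.sum_mul_le_mul_sum_of_le {ι R : Type*} [CommSemiring R] [PartialOrder R]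
    [IsOrderedRing R] {S : Finset ι} {w d : ι → R} {D : R}
    (hw : ∀ a ∈ S, 0 ≤ w a) (hd : ∀ a ∈ S, d a ≤ D) :
    ∑ a ∈ S, w a * d a ≤ D * ∑ a ∈ S, w a := by
  rw [mul_sum]
  refine sum_le_sum fun a ha => ?_
  rw [mul_comm D]
  exact mul_le_mul_of_nonneg_left (hd a ha) (hw a ha)

lemma min_sum_mul_le_inv_add_inv {ι 𝕜 : Type*} [Fintype ι] [DecidableEq ι] [Field 𝕜]
    [LinearOrder 𝕜] [IsStrictOrderedRing 𝕜] {S T : Finset ι} (hST : Disjoint S T)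
    {w d : ι → 𝕜} (hw : ∀ a, 0 ≤ w a) (hw1 : ∑ a, w a = 1) {D D' : 𝕜} (hD : 0 < D)
    (hD' : 0 < D') (hdS : ∀ a ∈ S, d a ≤ D) (hdT : ∀ a ∈ T, d a ≤ D') :
    min (∑ a ∈ S, w a * d a) (∑ a ∈ T, w a * d a) ≤ (D⁻¹ + D'⁻¹)⁻¹ := by
  have hmass : ∑ a ∈ S, w a + ∑ a ∈ T, w a ≤ 1 := by
    rw [← sum_union hST, ← hw1]
    exact sum_le_univ_sum_of_nonneg hw
  exact min_le_inv_add_inv hD hD' (sum_mul_le_mul_sum_of_le (fun a _ => hw a) hdS)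
    (sum_mul_le_mul_sum_of_le (fun a _ => hw a) hdT) hmass

lemma Finset.sum_ite_ite_mul {ι R : Type*} [DecidableEq ι] [NonUnitalNonAssocSemiring R]
    {i j : ι} (hij : i ≠ j) (S : Finset ι) (α β : R) (f : ι → R) :
    ∑ a ∈ S, (if a = i then α else if a = j then β else 0) * f a =
      (if i ∈ S then α * f i else 0) + (if j ∈ S then β * f j else 0) := by
  have hsplit : ∀ a, (if a = i then α else if a = j then β else 0) * f a =
      (if a = i then α * f a else 0) + (if a = j then β * f a else 0) := by
    intro a
    by_cases hai : a = i
    · simp [hai, hij]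
    · simp [hai]
  simp only [hsplit, sum_add_distrib, sum_ite_eq']

theorem simplex_allocation_game_two_groups_general
    {K : ℕ} (dv : Fin K → ℝ) (hdv : ∀ a, 0 < dv a)
    (Sm Sp : Finset (Fin K))
    (hdisj : Disjoint Sm Sp)
    (Dm Dp : ℝ)
    (hDm_ub : ∀ a ∈ Sm, dv a ≤ Dm) (hDp_ub : ∀ a ∈ Sp, dv a ≤ Dp)
    (aminus aplus : Fin K) (haminus : aminus ∈ Sm) (haplus : aplus ∈ Sp)
    (hdm : dv aminus = Dm) (hdp : dv aplus = Dp)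
    (wstar : Fin K → ℝ)
    (hwstar : wstar = fun a =>
      if a = aminus then Dm⁻¹ / (Dm⁻¹ + Dp⁻¹)
      else if a = aplus then Dp⁻¹ / (Dm⁻¹ + Dp⁻¹)
      else 0) :
    sSup {v : ℝ | ∃ w : Fin K → ℝ, (∀ a, 0 ≤ w a) ∧ (∑ a, w a) = 1 ∧
        v = min (∑ a ∈ Sm, w a * dv a) (∑ a ∈ Sp, w a * dv a)} =
      (Dm⁻¹ + Dp⁻¹)⁻¹ ∧
    min (∑ a ∈ Sm, wstar a * dv a) (∑ a ∈ Sp, wstar a * dv a) =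
      (Dm⁻¹ + Dp⁻¹)⁻¹ := by
  have hDm : 0 < Dm := hdm ▸ hdv aminus
  have hDp : 0 < Dp := hdp ▸ hdv aplus
  have haminus' : aminus ∉ Sp := disjoint_left.1 hdisj haminus
  have haplus' : aplus ∉ Sm := disjoint_right.1 hdisj haplus
  have hne : aminus ≠ aplus := fun h => haminus' (h ▸ haplus)
  have hsum : ∀ (S : Finset (Fin K)) (f : Fin K → ℝ), ∑ a ∈ S, wstar a * f a =
      (if aminus ∈ S then Dm⁻¹ / (Dm⁻¹ + Dp⁻¹) * f aminus else 0) +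
        (if aplus ∈ S then Dp⁻¹ / (Dm⁻¹ + Dp⁻¹) * f aplus else 0) := fun S f =>
    hwstar ▸ sum_ite_ite_mul hne S _ _ f
  have hshare : ∀ D ≠ 0, D⁻¹ / (Dm⁻¹ + Dp⁻¹) * D = (Dm⁻¹ + Dp⁻¹)⁻¹ := fun D hD => by
    field_simp
  have hval : min (∑ a ∈ Sm, wstar a * dv a) (∑ a ∈ Sp, wstar a * dv a) = (Dm⁻¹ + Dp⁻¹)⁻¹ := by
    simp only [hsum, haminus, haplus, haminus', haplus', if_true, if_false, add_zero, zero_add]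
    rw [hdm, hdp, hshare Dm hDm.ne', hshare Dp hDp.ne', min_self]
  have hwnn : ∀ a, 0 ≤ wstar a := by
    intro a
    simp only [hwstar]
    split_ifs <;> positivity
  have hwsum : ∑ a, wstar a = 1 := by
    simpa [← add_div, div_self (by positivity : Dm⁻¹ + Dp⁻¹ ≠ 0)] using hsum univ 1
  refine ⟨IsGreatest.csSup_eq ⟨⟨wstar, hwnn, hwsum, hval.symm⟩, ?_⟩, hval⟩
  rintro _ ⟨w, hw, hw1, rfl⟩
  exact min_sum_mul_le_inv_add_inv hdisj hw hw1 hDm hDp hDm_ub hDp_ub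

/-- Simplex allocation game (feasible case of Theorem 1): for positive values `d_a` and
a partition of the arms into two nonempty groups `S⁻, S⁺` with groupwise maxima `D⁻, D⁺`,
`sup_{w ∈ Δ_K} min(Σ_{a∈S⁻} w_a d_a, Σ_{a∈S⁺} w_a d_a) = ((D⁻)⁻¹ + (D⁺)⁻¹)⁻¹`,
attained by splitting the mass between maximizing indices of the two groups. -/
theorem simplex_allocation_game_two_groups
    {K : ℕ} (hK : 2 ≤ K) (dv : Fin K → ℝ) (hdv : ∀ a, 0 < dv a)
    (Sm Sp : Finset (Fin K)) (hSm : Sm.Nonempty) (hSp : Sp.Nonempty)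
    (hdisj : Disjoint Sm Sp) (hunion : Sm ∪ Sp = Finset.univ)
    (Dm Dp : ℝ)
    (hDm_ub : ∀ a ∈ Sm, dv a ≤ Dm) (hDp_ub : ∀ a ∈ Sp, dv a ≤ Dp)
    (aminus aplus : Fin K) (haminus : aminus ∈ Sm) (haplus : aplus ∈ Sp)
    (hdm : dv aminus = Dm) (hdp : dv aplus = Dp)
    (wstar : Fin K → ℝ)
    (hwstar : wstar = fun a =>
      if a = aminus then Dm⁻¹ / (Dm⁻¹ + Dp⁻¹)
      else if a = aplus then Dp⁻¹ / (Dm⁻¹ + Dp⁻¹)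
      else 0) :
    sSup {v : ℝ | ∃ w : Fin K → ℝ, (∀ a, 0 ≤ w a) ∧ (∑ a, w a) = 1 ∧
        v = min (∑ a ∈ Sm, w a * dv a) (∑ a ∈ Sp, w a * dv a)} =
      (Dm⁻¹ + Dp⁻¹)⁻¹ ∧
    min (∑ a ∈ Sm, wstar a * dv a) (∑ a ∈ Sp, wstar a * dv a) =
      (Dm⁻¹ + Dp⁻¹)⁻¹ :=
  simplex_allocation_game_two_groups_general dv hdv Sm Sp hdisj Dm Dp hDm_ub hDp_ub aminus aplus
    haminus haplus hdm hdp wstar hwstar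
end

section
/- Let β > 0 and η > 0 satisfy β·η ≤ e^{-1}. Then for every real x with x ≥ (1/β) · ln( e · ln(1/(βη)) / (βη) ), one has β·x ≥ ln(x/η). (Precise form of Proposition 1, the calibration inequality used to bound the stopping time in the proof of Lemma 1.) -/
/-!
Write `c = βη` and `L = ln(1/c) ≥ 1`; the threshold is `x₀ = S/β` with `S = ln(eL/c) = 1 + ln L + L`.
At `x₀` the inequality reads `ln S + L ≤ 1 + ln L + L`, i.e. `S ≤ eL`, which holds because
`ln L ≤ L - 1` gives `S ≤ 2L`. Beyond `x₀` it persists: since `βx₀ = S ≥ 1`, the function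
`βx - ln x` is nondecreasing on `[x₀, ∞)`.
-/

open Real

namespace Real

lemma log_sub_log_le_mul_sub {β x₀ x : ℝ} (hx₀ : 0 < x₀) (hβx₀ : 1 ≤ β * x₀) (hx : x₀ ≤ x) :
    log x - log x₀ ≤ β * (x - x₀) := by
  have hinv : 1 / x₀ ≤ β := by rwa [div_le_iff₀ hx₀]
  calc log x - log x₀ = log (x / x₀) := (log_div (hx₀.trans_le hx).ne' hx₀.ne').symm
    _ ≤ x / x₀ - 1 := log_le_sub_one_of_pos (div_pos (hx₀.trans_le hx) hx₀)
    _ = 1 / x₀ * (x - x₀) := by field_simp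
    _ ≤ β * (x - x₀) := mul_le_mul_of_nonneg_right hinv (sub_nonneg.mpr hx)

lemma log_div_le_mul_of_le {β η x₀ x : ℝ} (hη : η ≠ 0) (hx₀ : 0 < x₀) (hβx₀ : 1 ≤ β * x₀)
    (hx : x₀ ≤ x) (hbase : log (x₀ / η) ≤ β * x₀) : log (x / η) ≤ β * x := by
  rw [log_div hx₀.ne' hη] at hbase
  rw [log_div (hx₀.trans_le hx).ne' hη]
  linarith [log_sub_log_le_mul_sub hx₀ hβx₀ hx]

lemma one_le_log_one_div {c : ℝ} (hc : 0 < c) (h : c ≤ exp (-1)) : 1 ≤ log (1 / c) := by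
  rwa [le_log_iff_exp_le (by positivity), le_one_div (exp_pos 1) hc, one_div, ← exp_neg]

lemma log_one_add_log_add_le {L : ℝ} (hL : 1 ≤ L) : log (1 + log L + L) ≤ 1 + log L := by
  have hL_pos : 0 < L := by linarith
  have hS : 1 + log L + L ≤ exp 1 * L := by
    nlinarith [log_le_sub_one_of_pos hL_pos, exp_one_gt_two]
  calc log (1 + log L + L) ≤ log (exp 1 * L) :=
        log_le_log (by linarith [log_nonneg hL]) hS
    _ = 1 + log L := by rw [log_mul (exp_ne_zero 1) hL_pos.ne', log_exp]

end Real

/-- Proposition 1 (calibration inequality, Lemma 22 of Kaufmann et al.): if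
`β·η ≤ e⁻¹`, then every `x ≥ (1/β)·ln(e·ln(1/(βη))/(βη))` satisfies `β·x ≥ ln(x/η)`. -/
theorem calibration_inequality (β η : ℝ) (hβ : 0 < β) (hη : 0 < η)
    (h : β * η ≤ Real.exp (-1)) :
    ∀ x : ℝ, (1 / β) * Real.log (Real.exp 1 * Real.log (1 / (β * η)) / (β * η)) ≤ x →
      Real.log (x / η) ≤ β * x := by
  intro x hx
  have hc : 0 < β * η := mul_pos hβ hη
  have hL : 1 ≤ log (1 / (β * η)) := one_le_log_one_div hc h
  generalize hL_def : log (1 / (β * η)) = L at hL hx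
  have hlog_c : log (β * η) = -L := by rw [← hL_def, one_div, log_inv, neg_neg]
  have hS : log (exp 1 * L / (β * η)) = 1 + log L + L := by
    rw [log_div (by positivity) hc.ne', log_mul (exp_ne_zero 1) (by positivity), log_exp, hlog_c]
    ring
  have hS_pos : 0 < 1 + log L + L := by linarith [log_nonneg hL]
  have hβx₀ : β * ((1 / β) * (1 + log L + L)) = 1 + log L + L := by field_simp
  rw [hS] at hx
  refine log_div_le_mul_of_le hη.ne' (by positivity) ?_ hx ?_ <;> rw [hβx₀]
  · linarith [log_nonneg hL]
  · have hx₀η : (1 / β) * (1 + log L + L) / η = (1 + log L + L) / (β * η) := by field_simp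
    rw [hx₀η, log_div hS_pos.ne' hc.ne', hlog_c]
    linarith [log_one_add_log_add_le hL]
end

section
/- Let K ≥ 1 and let ψ : {1,2,3,…} → ℝ^K be a sequence with ψ_a(t) ≥ 0 for all a and t and Σ_{a=1}^K ψ_a(t) = 1 for every t. For each arm a and time t define the running average ψ̄_a(t) = (1/t) Σ_{s=1}^t ψ_a(s). Let w* ∈ Δ_K. If for every arm a ∈ {1,…,K} and every c > 0 the series Σ_{t=1}^∞ ψ_a(t) · 1{ψ̄_a(t) ≥ w*_a + c} converges, then for every arm a, ψ̄_a(t) → w*_a as t → ∞. (Proposition 3, the deterministic averaging lemma used to prove Theorem 2.) -/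
/-!
Once the overshooting terms have a tail sum below `1`, the partial sums can only exceed
`(w*_a + c) t` by a bounded amount: from the last time the average was below `w*_a + c`,
everything added is an overshooting term. Hence `limsup ψ̄_a ≤ w*_a` for every arm. Since both
`ψ̄(t)` and `w*` lie in the simplex, an arm falling short of `w*_a` would force another arm
above its target, so the `liminf` is at least `w*_a` as well.
-/

open Finset Filter Topology

noncomputable def runningAvg (x : ℕ → ℝ) (t : ℕ) : ℝ := (∑ s ∈ Icc 1 t, x s) / t

noncomputable def termsAbove (x : ℕ → ℝ) (L : ℝ) (t : ℕ) : ℝ :=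
  if 1 ≤ t ∧ L ≤ runningAvg x t then x t else 0

lemma runningAvg_mul_cast {x : ℕ → ℝ} {t : ℕ} (ht : 1 ≤ t) :
    runningAvg x t * t = ∑ s ∈ Icc 1 t, x s := by
  have : (t : ℝ) ≠ 0 := by positivity
  rw [runningAvg, div_mul_cancel₀ _ this]

lemma sum_runningAvg_eq_one {ι : Type*} [Fintype ι] {x : ℕ → ι → ℝ}
    (hx : ∀ t, 1 ≤ t → ∑ i, x t i = 1) {t : ℕ} (ht : 1 ≤ t) :
    ∑ i, runningAvg (fun s => x s i) t = 1 := by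
  have : (t : ℝ) ≠ 0 := by positivity
  simp only [runningAvg, ← sum_div]
  rw [sum_comm, sum_congr rfl fun s hs => hx s (mem_Icc.mp hs).1]
  simp [this]

lemma Summable.exists_sum_Ioc_lt {f : ℕ → ℝ} (hf : Summable f) {ε : ℝ} (hε : 0 < ε) :
    ∃ T, ∀ m t, T ≤ m → ∑ s ∈ Ioc m t, f s < ε := by
  obtain ⟨s₀, hs₀⟩ := hf.vanishing (Iio_mem_nhds hε)
  refine ⟨s₀.sup id + 1, fun m t hm => hs₀ _ ?_⟩
  refine disjoint_left.mpr fun s hs hs₀ => ?_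
  have hs_le : s ≤ s₀.sup id := le_sup (f := id) hs₀
  have hm_lt : m < s := (mem_Ioc.mp hs).1
  omega

/-- Induction on `t`: either the average at `t + 1` is below `L`, so the partial sum is below
`L (t + 1)` and the tail restarts there, or the new term is one of `termsAbove x L`. -/
lemma exists_sum_Icc_le_add_sum_Ioc (x : ℕ → ℝ) {L : ℝ} (hL : 0 ≤ L) (T : ℕ) :
    ∀ t, T ≤ t → ∃ m, T ≤ m ∧ m ≤ t ∧ ∑ s ∈ Icc 1 t, x s ≤
      max (L * t) (∑ s ∈ Icc 1 T, x s) + ∑ s ∈ Ioc m t, termsAbove x L s := by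
  refine Nat.le_induction ⟨T, le_rfl, le_rfl, by simp⟩ fun t hTt ⟨m, hTm, hmt, hm⟩ => ?_
  have hmax : max (L * t) (∑ s ∈ Icc 1 T, x s) ≤ max (L * ↑(t + 1)) (∑ s ∈ Icc 1 T, x s) := by
    gcongr; simp
  by_cases hbad : L ≤ runningAvg x (t + 1)
  · refine ⟨m, hTm, by omega, ?_⟩
    have hterm : termsAbove x L (t + 1) = x (t + 1) := if_pos ⟨by omega, hbad⟩
    rw [sum_Icc_succ_top (by omega), sum_Ioc_succ_top hmt, hterm]
    linarith
  · refine ⟨t + 1, by omega, le_rfl, ?_⟩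
    rw [← runningAvg_mul_cast (by omega), Ioc_self, sum_empty, add_zero]
    exact le_max_of_le_left (by gcongr; linarith)

lemma eventually_runningAvg_le {x : ℕ → ℝ} {L : ℝ} (hL : 0 ≤ L)
    (hx : Summable (termsAbove x L)) {c : ℝ} (hc : 0 < c) :
    ∀ᶠ t in atTop, runningAvg x t ≤ L + c := by
  obtain ⟨T, hT⟩ := hx.exists_sum_Ioc_lt one_pos
  set C := |∑ s ∈ Icc 1 T, x s| + 1
  have hC : ∀ᶠ t : ℕ in atTop, C / t ≤ c :=
    (tendsto_const_div_atTop_nhds_zero_nat C).eventually_le_const hc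
  filter_upwards [hC, eventually_ge_atTop T, eventually_ge_atTop 1] with t hCt hTt ht
  obtain ⟨m, hTm, -, hm⟩ := exists_sum_Icc_le_add_sum_Ioc x hL T t hTt
  have hsum : ∑ s ∈ Icc 1 t, x s ≤ L * t + C := by
    have hmax : max (L * t) (∑ s ∈ Icc 1 T, x s) ≤ L * t + |∑ s ∈ Icc 1 T, x s| :=
      max_le (by linarith [abs_nonneg (∑ s ∈ Icc 1 T, x s)])
        (by linarith [le_abs_self (∑ s ∈ Icc 1 T, x s), mul_nonneg hL (Nat.cast_nonneg t)])
    linarith [hT m t hTm]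
  have ht₀ : (0 : ℝ) < t := by positivity
  calc runningAvg x t ≤ (L * t + C) / t := by unfold runningAvg; gcongr
    _ = L + C / t := by field_simp
    _ ≤ L + c := by linarith

lemma sub_mul_le_of_sum_eq {ι : Type*} [Fintype ι] {u w : ι → ℝ} {δ : ℝ}
    (hsum : ∑ j, u j = ∑ j, w j) (hle : ∀ j, u j ≤ w j + δ) (i : ι) :
    w i - (Fintype.card ι - 1) * δ ≤ u i := by
  have hi : w i + δ - u i ≤ ∑ j, (w j + δ - u j) :=
    single_le_sum (f := fun j => w j + δ - u j) (fun j _ => by linarith [hle j]) (mem_univ i)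
  simp only [sum_sub_distrib, sum_add_distrib, hsum, sum_const, card_univ, nsmul_eq_mul] at hi
  linarith

/-- With the totals fixed, a deficit in one coordinate would need an excess in another. -/
lemma tendsto_of_sum_eq_of_eventually_le {ι α : Type*} [Fintype ι] {l : Filter α}
    {u : ι → α → ℝ} {w : ι → ℝ} (hsum : ∀ᶠ t in l, ∑ i, u i t = ∑ i, w i)
    (hle : ∀ i, ∀ c > 0, ∀ᶠ t in l, u i t ≤ w i + c) (i : ι) :
    Tendsto (u i) l (𝓝 (w i)) := by
  refine tendsto_order.2 ⟨fun b hb => ?_, fun b hb => ?_⟩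
  · have hcard : (0 : ℝ) < Fintype.card ι := by exact_mod_cast Fintype.card_pos_iff.2 ⟨i⟩
    set δ := (w i - b) / Fintype.card ι
    have hδ : 0 < δ := div_pos (by linarith) hcard
    have hδ' : (Fintype.card ι - 1) * δ = w i - b - δ := by
      simp only [δ]; field_simp
    filter_upwards [hsum, eventually_all.2 fun j => hle j δ hδ] with t hs hj
    linarith [sub_mul_le_of_sum_eq hs hj i]
  · filter_upwards [hle i ((b - w i) / 2) (by linarith)] with t ht
    linarith

theorem averaging_lemma_general
    {K : ℕ} (ψ : ℕ → Fin K → ℝ)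
    (hψ_sum : ∀ t, 1 ≤ t → ∑ a, ψ t a = 1)
    (wstar : Fin K → ℝ) (hw_nonneg : ∀ a, 0 ≤ wstar a) (hw_sum : ∑ a, wstar a = 1)
    (avg : Fin K → ℕ → ℝ)
    (havg : ∀ a t, avg a t = (∑ s ∈ Finset.Icc 1 t, ψ s a) / t)
    (hconv : ∀ a, ∀ c > (0 : ℝ), Summable fun t : ℕ =>
      if 1 ≤ t ∧ wstar a + c ≤ avg a t then ψ t a else 0) :
    ∀ a, Filter.Tendsto (fun t => avg a t) Filter.atTop (nhds (wstar a)) := by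
  have havg' : avg = fun a => runningAvg (fun s => ψ s a) := funext fun a => funext (havg a)
  subst havg'
  refine tendsto_of_sum_eq_of_eventually_le ?_ fun a c hc => ?_
  · filter_upwards [eventually_ge_atTop 1] with t ht
    rw [sum_runningAvg_eq_one hψ_sum ht, hw_sum]
  · have hL : 0 ≤ wstar a + c / 2 := by linarith [hw_nonneg a]
    exact (eventually_runningAvg_le hL (hconv a (c / 2) (half_pos hc)) (half_pos hc)).mono
      fun t ht => by linarith

/-- Proposition 3 (deterministic averaging lemma used to prove Theorem 2): if for every
arm `a` and every `c > 0` the series `Σ_t ψ_a(t)·1{ψ̄_a(t) ≥ w*_a + c}` converges, then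
the running averages `ψ̄_a(t)` converge to `w*_a`. -/
theorem averaging_lemma
    {K : ℕ} (hK : 1 ≤ K) (ψ : ℕ → Fin K → ℝ)
    (hψ_nonneg : ∀ t, 1 ≤ t → ∀ a, 0 ≤ ψ t a)
    (hψ_sum : ∀ t, 1 ≤ t → ∑ a, ψ t a = 1)
    (wstar : Fin K → ℝ) (hw_nonneg : ∀ a, 0 ≤ wstar a) (hw_sum : ∑ a, wstar a = 1)
    (avg : Fin K → ℕ → ℝ)
    (havg : ∀ a t, avg a t = (∑ s ∈ Finset.Icc 1 t, ψ s a) / t)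
    (hconv : ∀ a, ∀ c > (0 : ℝ), Summable fun t : ℕ =>
      if 1 ≤ t ∧ wstar a + c ≤ avg a t then ψ t a else 0) :
    ∀ a, Filter.Tendsto (fun t => avg a t) Filter.atTop (nhds (wstar a)) :=
  averaging_lemma_general ψ hψ_sum wstar hw_nonneg hw_sum avg havg hconv
end

section
/- Let b > 0 and C ∈ ℝ. For each δ ∈ (0,1) define τ(δ) = min{ t ∈ {1,2,3,…} : b·t ≥ ln(t/δ) + C }; this set is nonempty since b·t grows linearly in t while ln(t/δ) + C grows logarithmically. Then limsup_{δ → 0⁺} τ(δ) / ln(1/δ) ≤ 1/b. (Deterministic core of the proof of Lemma 1: the first time a linear drift of slope b exceeds the threshold ln(t/δ) + C is asymptotically at most ln(1/δ)/b as δ → 0.) -/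
/-!
Taking `t = ⌊(1/b + ε) ln(1/δ)⌋` gives `b t ≥ ln(1/δ) + b ε ln(1/δ) - b`, and the surplus
`b ε ln(1/δ)` eventually dominates `ln t + C + b`, which grows only like `ln ln(1/δ)`.
Hence `τ(δ) ≤ (1/b + ε) ln(1/δ)` for all small `δ`, for every `ε > 0`.
-/

open Filter Real Topology

theorem Real.eventually_log_add_le_mul {b : ℝ} (hb : 0 < b) (c : ℝ) :
    ∀ᶠ x : ℝ in atTop, log x + c ≤ b * x := by
  have hlog : ∀ᶠ x : ℝ in atTop, log x ≤ b / 2 * x := by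
    filter_upwards [isLittleO_log_id_atTop.def (half_pos hb), eventually_ge_atTop 0]
      with x hx hx0
    simpa [abs_of_nonneg hx0] using (le_abs_self _).trans hx
  have hc : ∀ᶠ x : ℝ in atTop, c ≤ b / 2 * x :=
    (tendsto_id.const_mul_atTop (half_pos hb)).eventually_ge_atTop c
  filter_upwards [hlog, hc] with x h₁ h₂
  linarith

theorem Real.tendsto_log_one_div_nhdsGT_zero :
    Tendsto (fun δ : ℝ => log (1 / δ)) (𝓝[>] 0) atTop := by
  simp only [one_div, log_inv]
  exact tendsto_neg_atBot_atTop.comp tendsto_log_nhdsGT_zero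

noncomputable def crossingTime (b C δ : ℝ) : ℕ :=
  sInf {t : ℕ | 1 ≤ t ∧ log (t / δ) + C ≤ b * t}

/-- The slack `b` pays for rounding `y` down to an integer. -/
theorem crossingTime_le {b C δ y : ℝ} (hb : 0 < b) (hδ : 0 < δ) (hy : 1 ≤ y)
    (hcross : log y + log (1 / δ) + C + b ≤ b * y) :
    (crossingTime b C δ : ℝ) ≤ y := by
  set N := ⌊y⌋₊
  have hN : 1 ≤ N := Nat.le_floor (by exact_mod_cast hy)
  have hNpos : (0 : ℝ) < N := by exact_mod_cast hN
  have hNy : (N : ℝ) ≤ y := Nat.floor_le (by linarith)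
  have hlogN : log N ≤ log y := log_le_log hNpos hNy
  have hbN : b * y - b < b * N := by nlinarith [Nat.sub_one_lt_floor y]
  have hmem : N ∈ {t : ℕ | 1 ≤ t ∧ log (t / δ) + C ≤ b * t} := by
    refine ⟨hN, ?_⟩
    rw [div_eq_mul_one_div, log_mul hNpos.ne' (by positivity)]
    linarith
  exact (Nat.cast_le.mpr (Nat.sInf_le hmem)).trans hNy

theorem eventually_crossingTime_div_le {b : ℝ} (hb : 0 < b) (C : ℝ) {ε : ℝ} (hε : 0 < ε) :
    ∀ᶠ δ in 𝓝[>] 0, (crossingTime b C δ : ℝ) / log (1 / δ) ≤ 1 / b + ε := by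
  set a := 1 / b + ε
  have ha : 0 < a := by positivity
  have hlarge : ∀ᶠ x : ℝ in atTop,
      0 < x ∧ 1 ≤ a * x ∧ log (a * x) + x + C + b ≤ b * (a * x) := by
    filter_upwards [eventually_gt_atTop 0,
      (tendsto_id.const_mul_atTop ha).eventually_ge_atTop 1,
      eventually_log_add_le_mul (mul_pos hb hε) (log a + C + b)] with x hx hax hlog
    refine ⟨hx, hax, ?_⟩
    have hba : b * (a * x) = x + b * ε * x := by
      simp only [a]
      field_simp
    rw [log_mul ha.ne' hx.ne', hba]
    linarith
  filter_upwards [tendsto_log_one_div_nhdsGT_zero.eventually hlarge, self_mem_nhdsWithin]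
    with δ ⟨hx, hax, hcross⟩ hδ
  rw [div_le_iff₀ hx]
  exact crossingTime_le hb hδ hax hcross

/-- Deterministic core of the proof of Lemma 1: the first time `t ≥ 1` at which a linear
drift `b·t` exceeds the threshold `ln(t/δ) + C` is asymptotically at most `ln(1/δ)/b`
as `δ → 0⁺`. -/
theorem stopping_time_limsup (b C : ℝ) (hb : 0 < b)
    (τ : ℝ → ℕ)
    (hτ : ∀ δ : ℝ, τ δ = sInf {t : ℕ | 1 ≤ t ∧ Real.log (t / δ) + C ≤ b * t}) :
    Filter.limsup (fun δ : ℝ => (τ δ : ℝ) / Real.log (1 / δ))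
      (nhdsWithin 0 (Set.Ioi 0)) ≤ 1 / b := by
  obtain rfl : τ = crossingTime b C := funext hτ
  have hcobdd : IsCoboundedUnder (· ≤ ·) (𝓝[>] 0)
      (fun δ : ℝ => (crossingTime b C δ : ℝ) / log (1 / δ)) := by
    refine isCoboundedUnder_le_of_eventually_le _ (x := 0) ?_
    filter_upwards [tendsto_log_one_div_nhdsGT_zero.eventually_gt_atTop 0] with δ hδ
    positivity
  exact le_of_forall_pos_le_add fun ε hε =>
    limsup_le_of_le hcobdd (eventually_crossingTime_div_le hb C hε)
end

section
/- Let K ≥ 2 and let d_1, …, d_K be positive real numbers, and set S = Σ_{a=1}^K d_a^{-1}. Define the allocation v ∈ ℝ^K by v_a = d_a^{-1} / (S + d_K^{-1}) for 1 ≤ a ≤ K−1 and v_K = 2·d_K^{-1} / (S + d_K^{-1}). Then v ∈ Δ_K, min_{1 ≤ a ≤ K} v_a · d_a = (S + d_K^{-1})^{-1}, and this is strictly smaller than sup_{w ∈ Δ_K} min_{1 ≤ a ≤ K} w_a · d_a = S^{-1}. (The strict sub-optimality, proved in the appendix, of the two-pass allocation that solves the CHM problem by running the lowest-mean test of Kaufmann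 et al. twice, compared with the optimal allocation of Theorem 1 in the infeasible case.) -/
/-!
If `m = min_a w_a d_a` then `w_a ≥ m / d_a` for every arm, and summing over the simplex gives
`m S ≤ 1`; the allocation proportional to `d_a⁻¹` equalises all `w_a d_a` and attains `S⁻¹`.
The two-pass allocation is proportional to `d_a⁻¹` with arm `K` counted twice, so it normalises
by `S + d_K⁻¹` instead of `S`, and its minimum is attained at any arm other than `K`.
-/

open Finset Set

section

variable {ι : Type*} [Fintype ι] {d : ι → ℝ}

lemma sum_inv_pos [Nonempty ι] (hd : ∀ a, 0 < d a) : 0 < ∑ a, (d a)⁻¹ :=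
  sum_pos (fun a _ => inv_pos.mpr (hd a)) univ_nonempty

lemma sum_inv_add_inv_pos [Nonempty ι] (hd : ∀ a, 0 < d a) (k : ι) :
    0 < ∑ b, (d b)⁻¹ + (d k)⁻¹ :=
  add_pos (sum_inv_pos hd) (inv_pos.mpr (hd k))

lemma sInf_range_mul_le_inv_sum_inv [Nonempty ι] (hd : ∀ a, 0 < d a) {w : ι → ℝ}
    (hw : ∑ a, w a = 1) :
    sInf (range fun a => w a * d a) ≤ (∑ a, (d a)⁻¹)⁻¹ := by
  set m := sInf (range fun a => w a * d a)
  have hm : ∀ a, m * (d a)⁻¹ ≤ w a := fun a => by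
    rw [← div_eq_mul_inv, div_le_iff₀ (hd a)]
    exact csInf_le (finite_range _).bddBelow ⟨a, rfl⟩
  have hmS : m * ∑ a, (d a)⁻¹ ≤ 1 := calc
    m * ∑ a, (d a)⁻¹ = ∑ a, m * (d a)⁻¹ := mul_sum _ _ _
    _ ≤ ∑ a, w a := sum_le_sum fun a _ => hm a
    _ = 1 := hw
  rwa [← one_div, le_div_iff₀ (sum_inv_pos hd)]

lemma sSup_simplex_sInf_range_mul [Nonempty ι] (hd : ∀ a, 0 < d a) :
    sSup {x : ℝ | ∃ w : ι → ℝ, (∀ a, 0 ≤ w a) ∧ (∑ a, w a) = 1 ∧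
        x = sInf (range fun a => w a * d a)} = (∑ a, (d a)⁻¹)⁻¹ := by
  set S := ∑ a, (d a)⁻¹
  have hS := sum_inv_pos hd
  refine IsGreatest.csSup_eq
    ⟨⟨fun a => (d a)⁻¹ / S, fun a => (div_pos (inv_pos.mpr (hd a)) hS).le, ?_, ?_⟩, ?_⟩
  · rw [← sum_div, div_self hS.ne']
  · have : (fun a => (d a)⁻¹ / S * d a) = fun _ => S⁻¹ := funext fun a => by
      field_simp [(hd a).ne']
    rw [this, range_const, csInf_singleton]
  · rintro x ⟨w, -, hw, rfl⟩
    exact sInf_range_mul_le_inv_sum_inv hd hw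

variable [DecidableEq ι]

noncomputable def twoPassAllocation (d : ι → ℝ) (k : ι) : ι → ℝ := fun a =>
  if a = k then 2 * (d k)⁻¹ / (∑ b, (d b)⁻¹ + (d k)⁻¹)
  else (d a)⁻¹ / (∑ b, (d b)⁻¹ + (d k)⁻¹)

variable (hd : ∀ a, 0 < d a) (k : ι)
include hd

lemma twoPassAllocation_mul_apply (a : ι) :
    twoPassAllocation d k a * d a =
      if a = k then 2 * (∑ b, (d b)⁻¹ + (d k)⁻¹)⁻¹ else (∑ b, (d b)⁻¹ + (d k)⁻¹)⁻¹ := by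
  unfold twoPassAllocation
  split_ifs with h
  · subst h; field_simp [(hd a).ne']
  · field_simp [(hd a).ne']

variable [Nonempty ι]

lemma twoPassAllocation_nonneg (a : ι) : 0 ≤ twoPassAllocation d k a := by
  have hD := sum_inv_add_inv_pos hd k
  have := inv_pos.mpr (hd a)
  have := inv_pos.mpr (hd k)
  unfold twoPassAllocation
  split_ifs <;> positivity

lemma sum_twoPassAllocation : ∑ a, twoPassAllocation d k a = 1 := by
  have hD := sum_inv_add_inv_pos hd k
  have hsplit : ∀ a, twoPassAllocation d k a = (d a)⁻¹ / (∑ b, (d b)⁻¹ + (d k)⁻¹) +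
      if a = k then (d k)⁻¹ / (∑ b, (d b)⁻¹ + (d k)⁻¹) else 0 := fun a => by
    unfold twoPassAllocation
    split_ifs with h
    · subst h; ring
    · ring
  simp only [hsplit, sum_add_distrib, Fintype.sum_ite_eq', ← sum_div, ← add_div]
  exact div_self hD.ne'

lemma sInf_range_twoPassAllocation_mul [Nontrivial ι] :
    sInf (range fun a => twoPassAllocation d k a * d a) = (∑ b, (d b)⁻¹ + (d k)⁻¹)⁻¹ := by
  have hD := inv_pos.mpr (sum_inv_add_inv_pos hd k)
  obtain ⟨b, hb⟩ := exists_ne k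
  refine IsLeast.csInf_eq ⟨⟨b, by simp only [twoPassAllocation_mul_apply hd, hb, if_false]⟩, ?_⟩
  rintro x ⟨a, rfl⟩
  dsimp only
  rw [twoPassAllocation_mul_apply hd]
  split_ifs <;> linarith

end

theorem two_pass_allocation_suboptimal_general
    {K : ℕ} (hK : 2 ≤ K) (dv : Fin K → ℝ) (hdv : ∀ a, 0 < dv a)
    (aK : Fin K)
    (S : ℝ) (hS : S = ∑ a, (dv a)⁻¹)
    (v : Fin K → ℝ)
    (hv : v = fun a =>
      if a = aK then 2 * (dv aK)⁻¹ / (S + (dv aK)⁻¹)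
      else (dv a)⁻¹ / (S + (dv aK)⁻¹)) :
    ((∀ a, 0 ≤ v a) ∧ (∑ a, v a) = 1) ∧
    sInf (Set.range fun a => v a * dv a) = (S + (dv aK)⁻¹)⁻¹ ∧
    sSup {x : ℝ | ∃ w : Fin K → ℝ, (∀ a, 0 ≤ w a) ∧ (∑ a, w a) = 1 ∧
        x = sInf (Set.range fun a => w a * dv a)} = S⁻¹ ∧
    (S + (dv aK)⁻¹)⁻¹ < S⁻¹ := by
  have : Nonempty (Fin K) := ⟨aK⟩
  have : Nontrivial (Fin K) := Fin.nontrivial_iff_two_le.mpr hK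
  subst hS
  change v = twoPassAllocation dv aK at hv
  subst hv
  refine ⟨⟨twoPassAllocation_nonneg hdv aK, sum_twoPassAllocation hdv aK⟩,
    sInf_range_twoPassAllocation_mul hdv aK, sSup_simplex_sInf_range_mul hdv, ?_⟩
  exact inv_strictAnti₀ (sum_inv_pos hdv) (lt_add_of_pos_right _ (inv_pos.mpr (hdv aK)))

/-- Strict sub-optimality of the two-pass allocation: the allocation `v` obtained by
running the lowest-mean test twice (which doubles the weight of the last arm) achieves
value `(S + d_K⁻¹)⁻¹`, which is strictly smaller than the optimal value
`S⁻¹ = sup_{w ∈ Δ_K} min_a w_a d_a`, where `S = Σ_a d_a⁻¹`. -/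
theorem two_pass_allocation_suboptimal
    {K : ℕ} (hK : 2 ≤ K) (dv : Fin K → ℝ) (hdv : ∀ a, 0 < dv a)
    (aK : Fin K) (haK : (aK : ℕ) = K - 1)
    (S : ℝ) (hS : S = ∑ a, (dv a)⁻¹)
    (v : Fin K → ℝ)
    (hv : v = fun a =>
      if a = aK then 2 * (dv aK)⁻¹ / (S + (dv aK)⁻¹)
      else (dv a)⁻¹ / (S + (dv aK)⁻¹)) :
    ((∀ a, 0 ≤ v a) ∧ (∑ a, v a) = 1) ∧
    sInf (Set.range fun a => v a * dv a) = (S + (dv aK)⁻¹)⁻¹ ∧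
    sSup {x : ℝ | ∃ w : Fin K → ℝ, (∀ a, 0 ≤ w a) ∧ (∑ a, w a) = 1 ∧
        x = sInf (Set.range fun a => w a * dv a)} = S⁻¹ ∧
    (S + (dv aK)⁻¹)⁻¹ < S⁻¹ :=
  two_pass_allocation_suboptimal_general hK dv hdv aK S hS v hv
end
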